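/- arXiv:1302.4181 — 8 statements merged into one kernel-verified Lean document; each statement's English description precedes it below -/
import Mathlib

section
/- Let 𝒩 ⊂ I be a finite set and g : I → ℝ be continuous and nondecreasing, continuously differentiable and twice continuously differentiable on I∖𝒩, with finite one-sided first derivatives g'(x±) at each x ∈ 𝒩, and suppose there is x₀ ∈ I with g(x₀) = 0, g ≤ 0 on (a,x₀] and g > 0 on (x₀,b). Assume: (i) there is a unique x̂ > x₀ such that (Ã_θ g)(x) > 0 for x ∈ (x₀,x̂)∖𝒩 and (Ã_θ g)(x) < 0 for x ∈ (x̂,b)∖𝒩; (ii) g'(x+) ≥ g'(x−) for all x ∈ (x₀,x̂)∩𝒩 and g'(x+) ≤ g'(x−) for all x ∈ (x̂,b)∩𝒩; (iii) lim_{x→b} ψ'(x)/S'(x) = +∞; (iv) sup_{x ∈ (K,b)∖𝒩} (Ã_θ g)(x) < 0 for some K ∈ (x̂,b). Then L_ψg is nonnegative on (a,x₀], nondecreasing on (x₀,x̂), strictly decreasing on (x̂,b)∖𝒩 with lim_{x→b}(L_ψ g)(x) = −∞, and there exists a unique x* ∈ [x̂,b) that maximizes g/ψ over I; moreover g/ψ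 is nondecreasing on (a,x*] and strictly decreasing on [x*,b). -/
/-!
Off `N`, the identity `(L_u f)' = u m' (Ã_θ f)` (valid because `Ã_θ u = 0`) makes `L_ψ g`
increase where `Ã_θ g > 0` and decrease where `Ã_θ g < 0`. At a point of `N`, mean value points
give one-sided cluster values of `L_ψ g` equal to `L_ψ g` with `g'` replaced by `g'(x±)`, and the
jump conditions place these so that the monotonicity survives. Near `b`,
`Ã_θ (g + δ/(2θ)) < 0`, so `L_ψ g ≤ C + δ/(2θ) · ψ'/S' → -∞`. Finally
`(g/ψ)' = S' L_ψ g / ψ²`, so `g/ψ` increases up to the first point `x*` after `x̂` where `L_ψ g`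
becomes nonpositive and strictly decreases beyond it.
-/

open Set Filter Topology
open scoped Finset

theorem Finset.compl_mem_nhdsNE (N : Finset ℝ) (x : ℝ) : (N : Set ℝ)ᶜ ∈ 𝓝[≠] x :=
  mem_of_superset (nhdsNE_of_nhdsNE_sdiff_finite univ_mem N.finite_toSet) fun _ hy => hy.2

theorem HasDerivAt.nonneg_of_monotoneOn {f : ℝ → ℝ} {f' x : ℝ} {s : Set ℝ} (hs : s ∈ 𝓝 x)
    (hf : HasDerivAt f f' x) (hmono : MonotoneOn f s) : 0 ≤ f' := by
  refine hf.hasDerivWithinAt.nonneg_of_monotoneOn ?_ hmono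
  rw [AccPt, inf_eq_left.2 (le_principal_iff.2 (mem_nhdsWithin_of_mem_nhds hs))]
  infer_instance

theorem exists_tendsto_deriv_nhdsGT {f f' : ℝ → ℝ} {x q d : ℝ} (hxq : x < q)
    (hf : ContinuousOn f (Ico x q)) (hf' : ∀ z ∈ Ioo x q, HasDerivAt f (f' z) z)
    (hd : HasDerivWithinAt f d (Ici x) x) :
    ∃ ζ : ℝ → ℝ, Tendsto ζ (𝓝[>] x) (𝓝[>] x) ∧ Tendsto (f' ∘ ζ) (𝓝[>] x) (𝓝 d) := by
  have hmvt : ∀ y ∈ Ioo x q, ∃ z ∈ Ioo x y, f' z = slope f x y := fun y hy => by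
    rw [slope_def_field]
    exact exists_hasDerivAt_eq_slope f f' hy.1 (hf.mono (Icc_subset_Ico_right hy.2))
      fun z hz => hf' z ⟨hz.1, hz.2.trans hy.2⟩
  choose! ζ hζ hζf' using hmvt
  have hev : ∀ᶠ y in 𝓝[>] x, y ∈ Ioo x q := Ioo_mem_nhdsGT hxq
  refine ⟨ζ, tendsto_nhdsWithin_iff.2 ⟨?_, hev.mono fun y hy => (hζ y hy).1⟩, ?_⟩
  · refine tendsto_of_tendsto_of_tendsto_of_le_of_le' tendsto_const_nhds
      (tendsto_id.mono_left nhdsWithin_le_nhds) ?_ ?_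
    · exact hev.mono fun y hy => (hζ y hy).1.le
    · exact hev.mono fun y hy => (hζ y hy).2.le
  · rw [hasDerivWithinAt_iff_tendsto_slope, Ici_sdiff_left] at hd
    exact hd.congr' (hev.mono fun y hy => (hζf' y hy).symm)

theorem exists_tendsto_deriv_nhdsLT {f f' : ℝ → ℝ} {x p d : ℝ} (hpx : p < x)
    (hf : ContinuousOn f (Ioc p x)) (hf' : ∀ z ∈ Ioo p x, HasDerivAt f (f' z) z)
    (hd : HasDerivWithinAt f d (Iic x) x) :
    ∃ ξ : ℝ → ℝ, Tendsto ξ (𝓝[<] x) (𝓝[<] x) ∧ Tendsto (f' ∘ ξ) (𝓝[<] x) (𝓝 d) := by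
  have hmvt : ∀ y ∈ Ioo p x, ∃ z ∈ Ioo y x, f' z = slope f x y := fun y hy => by
    rw [slope_comm, slope_def_field]
    exact exists_hasDerivAt_eq_slope f f' hy.2 (hf.mono (Icc_subset_Ioc_left hy.1))
      fun z hz => hf' z ⟨hy.1.trans hz.1, hz.2⟩
  choose! ξ hξ hξf' using hmvt
  have hev : ∀ᶠ y in 𝓝[<] x, y ∈ Ioo p x := Ioo_mem_nhdsLT hpx
  refine ⟨ξ, tendsto_nhdsWithin_iff.2 ⟨?_, hev.mono fun y hy => (hξ y hy).2⟩, ?_⟩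
  · refine tendsto_of_tendsto_of_tendsto_of_le_of_le'
      (tendsto_id.mono_left nhdsWithin_le_nhds) tendsto_const_nhds ?_ ?_
    · exact hev.mono fun y hy => (hξ y hy).1.le
    · exact hev.mono fun y hy => (hξ y hy).2.le
  · rw [hasDerivWithinAt_iff_tendsto_slope, Iic_sdiff_right] at hd
    exact hd.congr' (hev.mono fun y hy => (hξf' y hy).symm)

theorem rel_of_rel_across_at_most_one {R : ℝ → ℝ → Prop} (hR : ∀ {x y z}, R x y → R y z → R x z)
    (N : Finset ℝ) {s : Set ℝ} (hs : s.OrdConnected)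
    (hfree : ∀ x ∈ s, ∀ y ∈ s, x < y → (∀ z ∈ Icc x y, z ∉ N) → R x y)
    (hone : ∀ n ∈ N, ∀ x ∈ s, ∀ y ∈ s, x < n → n < y → (∀ z ∈ Icc x y, z ∈ N → z = n) → R x y)
    {x y : ℝ} (hx : x ∈ s \ N) (hy : y ∈ s \ N) (hxy : x < y) : R x y := by
  classical
  suffices ∀ k, ∀ x ∈ s \ N, ∀ y ∈ s \ N, x < y → #{z ∈ N | z ∈ Ioo x y} = k → R x y from
    this _ x hx y hy hxy rfl
  intro k
  induction k using Nat.strong_induction_on with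
  | _ k ih =>
  intro x hx y hy hxy hk
  have hmem : ∀ {z}, z ∈ Icc x y → z ∈ N → z ∈ {z ∈ N | z ∈ Ioo x y} := fun hz hzN =>
    Finset.mem_filter.2 ⟨hzN, (hz.1.lt_of_ne (by rintro rfl; exact hx.2 hzN)),
      (hz.2.lt_of_ne (by rintro rfl; exact hy.2 hzN))⟩
  by_cases hk1 : k ≤ 1
  · rcases Finset.eq_empty_or_nonempty {z ∈ N | z ∈ Ioo x y} with hF | ⟨n, hn⟩
    · exact hfree x hx.1 y hy.1 hxy fun z hz hzN => Finset.notMem_empty z (hF ▸ hmem hz hzN)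
    · have hn' := Finset.mem_filter.1 hn
      exact hone n hn'.1 x hx.1 y hy.1 hn'.2.1 hn'.2.2 fun z hz hzN =>
        Finset.card_le_one.1 (hk ▸ hk1) z (hmem hz hzN) n hn
  -- a point off `N` between two points of `N` splits `(x, y)` into two intervals with fewer
  -- points of `N`
  · obtain ⟨m₁, hm₁, m₂, hm₂, hne⟩ := Finset.one_lt_card.1 (hk ▸ not_le.1 hk1)
    wlog hlt : m₁ < m₂ generalizing m₁ m₂
    · exact this m₂ hm₂ m₁ hm₁ hne.symm (hne.lt_or_gt.resolve_left hlt)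
    obtain ⟨z, hz, hzN⟩ := (Set.Ioo_infinite hlt).exists_notMem_finset N
    have hm₁' := (Finset.mem_filter.1 hm₁).2
    have hm₂' := (Finset.mem_filter.1 hm₂).2
    have hzs : z ∈ s \ N := ⟨hs.out hx.1 hy.1 ⟨(hm₁'.1.trans hz.1).le, (hz.2.trans hm₂'.2).le⟩, hzN⟩
    refine hR (ih _ ?_ x hx z hzs (hm₁'.1.trans hz.1) rfl)
      (ih _ ?_ z hzs y hy (hz.2.trans hm₂'.2) rfl)
    · refine hk ▸ Finset.card_lt_card ((Finset.ssubset_iff_of_subset ?_).2 ⟨m₂, hm₂, ?_⟩)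
      · exact Finset.monotone_filter_right _ fun w _ hw => ⟨hw.1, hw.2.trans (hz.2.trans hm₂'.2)⟩
      · simp only [Finset.mem_filter, not_and]; exact fun _ h => lt_irrefl _ (h.2.trans hz.2)
    · refine hk ▸ Finset.card_lt_card ((Finset.ssubset_iff_of_subset ?_).2 ⟨m₁, hm₁, ?_⟩)
      · exact Finset.monotone_filter_right _ fun w _ hw => ⟨(hm₁'.1.trans hz.1).trans hw.1, hw.2⟩
      · simp only [Finset.mem_filter, not_and]; exact fun _ h => lt_irrefl _ (hz.1.trans h.1)

theorem monotoneOn_diff_finset_of_jumps {L : ℝ → ℝ} {s : Set ℝ} (hs : s.OrdConnected)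
    {N : Finset ℝ} (hpiece : ∀ p ∈ s, ∀ q ∈ s, p < q → (∀ z ∈ Icc p q, z ∉ N) → L p ≤ L q)
    (hjump : ∀ n ∈ N, n ∈ s → ∃ lm lp, lm ≤ lp ∧
      MapClusterPt lm (𝓝[<] n) L ∧ MapClusterPt lp (𝓝[>] n) L) :
    MonotoneOn L (s \ N) := by
  intro x hx y hy hxy
  rcases hxy.eq_or_lt with rfl | hxy
  · rfl
  refine rel_of_rel_across_at_most_one (R := fun x y => L x ≤ L y) le_trans N hs hpiece
    (fun n hn x hx y hy hxn hny hone => ?_) hx hy hxy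
  have hfree : ∀ p q, x ≤ p → q ≤ y → q < n ∨ n < p → ∀ z ∈ Icc p q, z ∉ N :=
    fun p q hp hq hpq z hz hzN => by
      obtain rfl := hone z ⟨hp.trans hz.1, hz.2.trans hq⟩ hzN
      rcases hpq with h | h <;> linarith [hz.1, hz.2]
  obtain ⟨lm, lp, hlmp, hlm, hlp⟩ := hjump n hn (hs.out hx hy ⟨hxn.le, hny.le⟩)
  have hxlm : L x ≤ lm := isClosed_Ici.mem_of_mapClusterPt hlm <| by
    filter_upwards [Ioo_mem_nhdsLT hxn] with z hz
    exact hpiece x hx z (hs.out hx hy ⟨hz.1.le, (hz.2.trans hny).le⟩) hz.1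
      (hfree x z le_rfl (hz.2.trans hny).le (.inl hz.2))
  have hlpy : lp ≤ L y := isClosed_Iic.mem_of_mapClusterPt hlp <| by
    filter_upwards [Ioo_mem_nhdsGT hny] with z hz
    exact hpiece z (hs.out hx hy ⟨(hxn.trans hz.1).le, hz.2.le⟩) y hy hz.2
      (hfree z y (hxn.trans hz.1).le le_rfl (.inr hz.1))
  exact hxlm.trans (hlmp.trans hlpy)

theorem strictAntiOn_diff_finset_of_jumps {L : ℝ → ℝ} {s : Set ℝ} (hs : s.OrdConnected)
    {N : Finset ℝ} (hpiece : ∀ p ∈ s, ∀ q ∈ s, p < q → (∀ z ∈ Icc p q, z ∉ N) → L q < L p)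
    (hjump : ∀ n ∈ N, n ∈ s → ∃ lm lp, lp ≤ lm ∧
      MapClusterPt lm (𝓝[<] n) L ∧ MapClusterPt lp (𝓝[>] n) L) :
    StrictAntiOn L (s \ N) := by
  intro x hx y hy hxy
  refine rel_of_rel_across_at_most_one (R := fun x y => L y < L x) (fun h h' => h'.trans h) N hs
    hpiece (fun n hn x hx y hy hxn hny hone => ?_) hx hy hxy
  have hfree : ∀ p q, x ≤ p → q ≤ y → q < n ∨ n < p → ∀ z ∈ Icc p q, z ∉ N :=
    fun p q hp hq hpq z hz hzN => by
      obtain rfl := hone z ⟨hp.trans hz.1, hz.2.trans hq⟩ hzN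
      rcases hpq with h | h <;> linarith [hz.1, hz.2]
  obtain ⟨lm, lp, hlpm, hlm, hlp⟩ := hjump n hn (hs.out hx hy ⟨hxn.le, hny.le⟩)
  obtain ⟨t, hxt, htn⟩ := exists_between hxn
  have hts : t ∈ s := hs.out hx hy ⟨hxt.le, (htn.trans hny).le⟩
  have htx : L t < L x := hpiece x hx t hts hxt (hfree x t le_rfl (htn.trans hny).le (.inl htn))
  have hlmt : lm ≤ L t := isClosed_Iic.mem_of_mapClusterPt hlm <| by
    filter_upwards [Ioo_mem_nhdsLT htn] with z hz
    exact (hpiece t hts z (hs.out hx hy ⟨(hxt.trans hz.1).le, (hz.2.trans hny).le⟩) hz.1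
      (hfree t z hxt.le (hz.2.trans hny).le (.inl hz.2))).le
  have hylp : L y ≤ lp := isClosed_Ici.mem_of_mapClusterPt hlp <| by
    filter_upwards [Ioo_mem_nhdsGT hny] with z hz
    exact (hpiece z (hs.out hx hy ⟨(hxn.trans hz.1).le, hz.2.le⟩) y hy hz.2
      (hfree z y (hxn.trans hz.1).le le_rfl (.inr hz.1))).le
  exact (hylp.trans (hlpm.trans hlmt)).trans_lt htx

theorem monotoneOn_of_hasDerivAt_nonneg_off_finset {D : Set ℝ} (hD : Convex ℝ D) {f f' : ℝ → ℝ}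
    (N : Finset ℝ) (hf : ContinuousOn f D) (hf' : ∀ x ∈ interior D \ N, HasDerivAt f (f' x) x)
    (hf'₀ : ∀ x ∈ interior D \ N, 0 ≤ f' x) : MonotoneOn f D := by
  classical
  induction N using Finset.induction_on generalizing D with
  | empty =>
    exact monotoneOn_of_hasDerivWithinAt_nonneg hD hf
      (fun x hx => (hf' x ⟨hx, by simp⟩).hasDerivWithinAt) fun x hx => hf'₀ x ⟨hx, by simp⟩
  | insert n N _ ih =>
    have hsub : ∀ D', Convex ℝ D' → D' ⊆ D → n ∉ interior D' → MonotoneOn f D' :=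
      fun D' hD' hD'D hn => ih hD' (hf.mono hD'D)
        (fun x hx => hf' x ⟨interior_mono hD'D hx.1, by
          simpa [ne_of_mem_of_not_mem hx.1 hn] using hx.2⟩)
        (fun x hx => hf'₀ x ⟨interior_mono hD'D hx.1, by
          simpa [ne_of_mem_of_not_mem hx.1 hn] using hx.2⟩)
    by_cases hnD : n ∈ D
    · have hle := hsub _ (hD.inter (convex_Iic n)) inter_subset_left (by simp [interior_inter])
      have hge := hsub _ (hD.inter (convex_Ici n)) inter_subset_left (by simp [interior_inter])
      rw [← inter_univ D, ← Iic_union_Ici (a := n), inter_union_distrib_left]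
      exact hle.union_right hge ⟨⟨hnD, self_mem_Iic⟩, fun x hx => hx.2⟩
        ⟨⟨hnD, self_mem_Ici⟩, fun x hx => hx.2⟩
    · exact hsub D hD subset_rfl fun h => hnD (interior_subset h)

theorem strictMonoOn_of_hasDerivAt_pos_off_finset {D : Set ℝ} (hD : Convex ℝ D) {f f' : ℝ → ℝ}
    (N : Finset ℝ) (hf : ContinuousOn f D) (hf' : ∀ x ∈ interior D \ N, HasDerivAt f (f' x) x)
    (hf'₀ : ∀ x ∈ interior D \ N, 0 < f' x) : StrictMonoOn f D := by
  have hmono := monotoneOn_of_hasDerivAt_nonneg_off_finset hD N hf hf' fun x hx => (hf'₀ x hx).le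
  intro x hx y hy hxy
  refine (hmono hx hy hxy.le).lt_of_ne fun heq => ?_
  have hxyD : Icc x y ⊆ D := hD.ordConnected.out hx hy
  obtain ⟨z, hz, hzN⟩ := (Ioo_infinite hxy).exists_notMem_finset N
  have hzD : z ∈ interior D \ N := ⟨interior_mono hxyD (by rwa [interior_Icc]), hzN⟩
  -- `f` is constant on `[x, y]`, so its derivative at `z` vanishes
  have hconst : f =ᶠ[𝓝 z] fun _ => f x := eventually_of_mem (Ioo_mem_nhds hz.1 hz.2) fun w hw =>
    le_antisymm (heq ▸ hmono (hxyD (Ioo_subset_Icc_self hw)) hy hw.2.le)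
      (hmono hx (hxyD (Ioo_subset_Icc_self hw)) hw.1.le)
  exact (hf'₀ z hzD).ne'
    ((hf' z hzD).unique ((hasDerivAt_const z (f x)).congr_of_eventuallyEq hconst))

theorem exists_sign_change_of_strictAntiOn {L : ℝ → ℝ} {N : Finset ℝ} {a b : ℝ} (hab : a < b)
    (hanti : StrictAntiOn L (Ioo a b \ N)) (hL : Tendsto L (𝓝[<] b) atBot) :
    ∃ c ∈ Ico a b, (∀ x ∈ Ioo a c \ N, 0 < L x) ∧ ∀ x ∈ Ioo c b \ N, L x < 0 := by
  set T := {x | x ∈ Ioo a b \ N ∧ L x ≤ 0}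
  obtain ⟨t₀, ht₀⟩ : T.Nonempty := Eventually.exists (f := 𝓝[<] b) <| by
    filter_upwards [Ioo_mem_nhdsLT hab, nhdsLT_le_nhdsNE b (N.compl_mem_nhdsNE b),
      hL.eventually (eventually_le_atBot 0)] with x h₁ h₂ h₃ using ⟨⟨h₁, h₂⟩, h₃⟩
  have hbdd : BddBelow T := ⟨a, fun x hx => hx.1.1.1.le⟩
  have hac : a ≤ sInf T := le_csInf ⟨t₀, ht₀⟩ fun x hx => hx.1.1.1.le
  have hcb : sInf T < b := (csInf_le hbdd ht₀).trans_lt ht₀.1.1.2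
  refine ⟨sInf T, ⟨hac, hcb⟩, fun x hx => not_le.1 fun hle => ?_, fun x hx => ?_⟩
  · exact (csInf_le hbdd ⟨⟨⟨hx.1.1, hx.1.2.trans hcb⟩, hx.2⟩, hle⟩).not_gt hx.1.2
  · obtain ⟨t, ht, htx⟩ := exists_lt_of_csInf_lt ⟨t₀, ht₀⟩ hx.1.1
    exact (hanti ht.1 ⟨⟨hac.trans_lt hx.1.1, hx.1.2⟩, hx.2⟩ htx).trans_le ht.2

theorem exists_optimal_threshold {Q L w : ℝ → ℝ} {N : Finset ℝ} {a b xh : ℝ}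
    (hxh : xh ∈ Ioo a b) (hQc : ContinuousOn Q (Ioo a b))
    (hQd : ∀ x ∈ Ioo a b \ N, HasDerivAt Q (w x * L x) x) (hw : ∀ x ∈ Ioo a b, 0 < w x)
    (hL₁ : ∀ x ∈ Ioo a xh \ N, 0 ≤ L x) (hL₂ : StrictAntiOn L (Ioo xh b \ N))
    (hL₃ : Tendsto L (𝓝[<] b) atBot) :
    ∃ xs ∈ Ico xh b, (∀ y ∈ Ioo a b, Q y ≤ Q xs) ∧
      (∀ y ∈ Ico xh b, (∀ z ∈ Ioo a b, Q z ≤ Q y) → y = xs) ∧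
      MonotoneOn Q (Ioc a xs) ∧ StrictAntiOn Q (Ico xs b) := by
  obtain ⟨xs, ⟨hxhxs, hxsb⟩, hpos, hneg⟩ := exists_sign_change_of_strictAntiOn hxh.2 hL₂ hL₃
  have hxs : xs ∈ Ioo a b := ⟨hxh.1.trans_le hxhxs, hxsb⟩
  have hmono : MonotoneOn Q (Ioc a xs) := by
    refine monotoneOn_of_hasDerivAt_nonneg_off_finset (convex_Ioc a xs) (insert xh N)
      (hQc.mono (Ioc_subset_Ioo_right hxsb)) (fun x hx => hQd x ?_) fun x hx => ?_
    all_goals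
      rw [interior_Ioc, Finset.coe_insert, Set.mem_sdiff, mem_insert_iff, not_or] at hx
      obtain ⟨⟨hax, hxxs⟩, hxxh, hxN⟩ := hx
    · exact ⟨⟨hax, hxxs.trans hxsb⟩, hxN⟩
    refine mul_nonneg (hw x ⟨hax, hxxs.trans hxsb⟩).le ?_
    rcases lt_or_gt_of_ne hxxh with hlt | hgt
    exacts [hL₁ x ⟨⟨hax, hlt⟩, hxN⟩, (hpos x ⟨⟨hgt, hxxs⟩, hxN⟩).le]
  have hanti : StrictAntiOn Q (Ico xs b) := by
    have := strictMonoOn_of_hasDerivAt_pos_off_finset (f := fun x => -Q x) (convex_Ico xs b) N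
      (hQc.mono (Ico_subset_Ioo_left hxs.1)).neg
      (fun x hx => (hQd x ⟨⟨hxs.1.trans_le (interior_subset hx.1).1, (interior_subset hx.1).2⟩,
        hx.2⟩).neg)
      fun x hx => by
        rw [interior_Ico] at hx
        exact neg_pos.2 (mul_neg_of_pos_of_neg (hw x ⟨hxs.1.trans hx.1.1, hx.1.2⟩) (hneg x hx))
    exact fun x hx y hy hxy => neg_lt_neg_iff.1 (this hx hy hxy)
  have hinc : StrictMonoOn Q (Icc xh xs) := by
    refine strictMonoOn_of_hasDerivAt_pos_off_finset (convex_Icc xh xs) N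
      (hQc.mono (Icc_subset_Ioo hxh.1 hxsb)) (fun x hx => hQd x ?_) fun x hx => ?_
    all_goals rw [interior_Icc] at hx
    · exact ⟨⟨hxh.1.trans hx.1.1, hx.1.2.trans hxsb⟩, hx.2⟩
    · exact mul_pos (hw x ⟨hxh.1.trans hx.1.1, hx.1.2.trans hxsb⟩) (hpos x hx)
  refine ⟨xs, ⟨hxhxs, hxsb⟩, fun y hy => ?_, fun y hy hmax => ?_, hmono, hanti⟩
  · rcases le_or_gt y xs with hyxs | hyxs
    · exact hmono ⟨hy.1, hyxs⟩ ⟨hxs.1, le_rfl⟩ hyxs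
    · exact (hanti ⟨le_rfl, hxsb⟩ ⟨hyxs.le, hy.2⟩ hyxs).le
  · rcases lt_trichotomy y xs with hlt | heq | hgt
    · exact absurd (hmax xs hxs) (hinc ⟨hy.1, hlt.le⟩ ⟨hxhxs, le_rfl⟩ hlt).not_ge
    · exact heq
    · exact absurd (hmax xs hxs) (hanti ⟨le_rfl, hxsb⟩ ⟨hgt.le, hy.2⟩ hgt).not_ge

noncomputable def generator (σ α : ℝ → ℝ) (θ : ℝ) (f f' f'' : ℝ → ℝ) (x : ℝ) : ℝ :=
  1 / 2 * σ x ^ 2 * f'' x + α x * f' x - θ * f x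

noncomputable def speedDensity (σ S : ℝ → ℝ) (x : ℝ) : ℝ :=
  2 / (σ x ^ 2 * S x)

/-- The paper's `L_u f = (f' u - u' f) / S'`; here `S` stands for the scale density `S'`. -/
noncomputable def scaledWronskian (S u u' f f' : ℝ → ℝ) (x : ℝ) : ℝ :=
  (f' x * u x - u' x * f x) / S x

theorem scaledWronskian_add_const (S u u' f f' : ℝ → ℝ) (c x : ℝ) :
    scaledWronskian S u u' (fun y => f y + c) f' x =
      scaledWronskian S u u' f f' x - c * (u' x / S x) := by
  simp only [scaledWronskian]
  ring

theorem hasDerivAt_scaledWronskian {σ α S u u' u'' f f' f'' : ℝ → ℝ} {θ x : ℝ}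
    (hσ : σ x ≠ 0) (hS0 : S x ≠ 0) (hS : HasDerivAt S (-(2 * α x / σ x ^ 2) * S x) x)
    (hu : HasDerivAt u (u' x) x) (hu' : HasDerivAt u' (u'' x) x)
    (hf : HasDerivAt f (f' x) x) (hf' : HasDerivAt f' (f'' x) x)
    (hgen : generator σ α θ u u' u'' x = 0) :
    HasDerivAt (scaledWronskian S u u' f f')
      (u x * speedDensity σ S x * generator σ α θ f f' f'' x) x := by
  refine (((hf'.mul hu).sub (hu'.mul hf)).div hS hS0).congr_deriv ?_
  simp only [generator, speedDensity, Pi.sub_apply, Pi.mul_apply] at hgen ⊢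
  field_simp
  linear_combination (-2 * f x) * hgen

theorem hasDerivAt_exp_neg_integral {ρ : ℝ → ℝ} {a b c x : ℝ} (hρ : ContinuousOn ρ (Ioo a b))
    (hc : c ∈ Ioo a b) (hx : x ∈ Ioo a b) :
    HasDerivAt (fun y => Real.exp (-∫ t in c..y, ρ t)) (-ρ x * Real.exp (-∫ t in c..x, ρ t)) x := by
  have hF : HasDerivAt (fun y => ∫ t in c..y, ρ t) (ρ x) x :=
    intervalIntegral.integral_hasDerivAt_right
      (hρ.mono (ordConnected_Ioo.uIcc_subset hc hx)).intervalIntegrable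
      (hρ.stronglyMeasurableAtFilter isOpen_Ioo x hx) (hρ.continuousAt (Ioo_mem_nhds hx.1 hx.2))
  simpa [mul_comm] using hF.neg.exp

/-- `u > 0` solves `Ã_θ u = 0` on `(a, b)` and `S > 0` solves `S' = -(2α/σ²) S` there, i.e. `S`
is a scale density. -/
structure PositiveSolution (a b θ : ℝ) (σ α S u u' u'' : ℝ → ℝ) : Prop where
  sigma_ne_zero : ∀ x ∈ Ioo a b, σ x ≠ 0
  scale_pos : ∀ x ∈ Ioo a b, 0 < S x
  hasDerivAt_scale : ∀ x ∈ Ioo a b, HasDerivAt S (-(2 * α x / σ x ^ 2) * S x) x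
  pos : ∀ x ∈ Ioo a b, 0 < u x
  hasDerivAt : ∀ x ∈ Ioo a b, HasDerivAt u (u' x) x
  hasDerivAt_deriv : ∀ x ∈ Ioo a b, HasDerivAt u' (u'' x) x
  generator_eq_zero : ∀ x ∈ Ioo a b, generator σ α θ u u' u'' x = 0

structure PiecewiseC2 (a b : ℝ) (N : Finset ℝ) (f f' f'' fp fm : ℝ → ℝ) : Prop where
  continuousOn : ContinuousOn f (Ioo a b)
  hasDerivAt : ∀ x ∈ Ioo a b \ N, HasDerivAt f (f' x) x
  hasDerivAt_deriv : ∀ x ∈ Ioo a b \ N, HasDerivAt f' (f'' x) x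
  hasDerivWithinAt_Ici : ∀ x ∈ (N : Set ℝ), HasDerivWithinAt f (fp x) (Ici x) x
  hasDerivWithinAt_Iic : ∀ x ∈ (N : Set ℝ), HasDerivWithinAt f (fm x) (Iic x) x

namespace PositiveSolution

variable {a b θ : ℝ} {σ α S u u' u'' : ℝ → ℝ} {N : Finset ℝ} {f f' f'' fp fm : ℝ → ℝ} {x : ℝ}

theorem mul_speedDensity_pos (h : PositiveSolution a b θ σ α S u u' u'') (hx : x ∈ Ioo a b) :
    0 < u x * speedDensity σ S x := by
  have := h.pos x hx
  have := h.scale_pos x hx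
  have := h.sigma_ne_zero x hx
  unfold speedDensity
  positivity

theorem hasDerivAt_scaledWronskian (h : PositiveSolution a b θ σ α S u u' u'')
    (hx : x ∈ Ioo a b) (hf : HasDerivAt f (f' x) x) (hf' : HasDerivAt f' (f'' x) x) :
    HasDerivAt (scaledWronskian S u u' f f')
      (u x * speedDensity σ S x * generator σ α θ f f' f'' x) x :=
  _root_.hasDerivAt_scaledWronskian (h.sigma_ne_zero x hx) (h.scale_pos x hx).ne'
    (h.hasDerivAt_scale x hx) (h.hasDerivAt x hx) (h.hasDerivAt_deriv x hx) hf hf'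
    (h.generator_eq_zero x hx)

theorem strictMonoOn_scaledWronskian_of_generator_pos
    (h : PositiveSolution a b θ σ α S u u' u'') {D : Set ℝ} (hD : Convex ℝ D)
    (hDab : D ⊆ Ioo a b) (hf : ∀ x ∈ D, HasDerivAt f (f' x) x)
    (hf' : ∀ x ∈ D, HasDerivAt f' (f'' x) x)
    (hgen : ∀ x ∈ interior D, 0 < generator σ α θ f f' f'' x) :
    StrictMonoOn (scaledWronskian S u u' f f') D :=
  have hL x (hx : x ∈ D) := h.hasDerivAt_scaledWronskian (hDab hx) (hf x hx) (hf' x hx)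
  strictMonoOn_of_hasDerivWithinAt_pos hD (fun x hx => (hL x hx).continuousAt.continuousWithinAt)
    (fun x hx => (hL x (interior_subset hx)).hasDerivWithinAt)
    fun x hx => mul_pos (h.mul_speedDensity_pos (hDab (interior_subset hx))) (hgen x hx)

theorem strictAntiOn_scaledWronskian_of_generator_neg
    (h : PositiveSolution a b θ σ α S u u' u'') {D : Set ℝ} (hD : Convex ℝ D)
    (hDab : D ⊆ Ioo a b) (hf : ∀ x ∈ D, HasDerivAt f (f' x) x)
    (hf' : ∀ x ∈ D, HasDerivAt f' (f'' x) x)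
    (hgen : ∀ x ∈ interior D, generator σ α θ f f' f'' x < 0) :
    StrictAntiOn (scaledWronskian S u u' f f') D :=
  have hL x (hx : x ∈ D) := h.hasDerivAt_scaledWronskian (hDab hx) (hf x hx) (hf' x hx)
  strictAntiOn_of_hasDerivWithinAt_neg hD (fun x hx => (hL x hx).continuousAt.continuousWithinAt)
    (fun x hx => (hL x (interior_subset hx)).hasDerivWithinAt)
    fun x hx => mul_neg_of_pos_of_neg (h.mul_speedDensity_pos (hDab (interior_subset hx)))
      (hgen x hx)

theorem tendsto_scaledWronskian_comp (h : PositiveSolution a b θ σ α S u u' u'')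
    (hx : x ∈ Ioo a b) (hfx : ContinuousAt f x) {ζ : ℝ → ℝ} {l : Filter ℝ} {d : ℝ}
    (hζ : Tendsto ζ l (𝓝 x)) (hf' : Tendsto (f' ∘ ζ) l (𝓝 d)) :
    Tendsto (scaledWronskian S u u' f f' ∘ ζ) l (𝓝 ((d * u x - u' x * f x) / S x)) := by
  have hcomp {g : ℝ → ℝ} (hg : ContinuousAt g x) : Tendsto (g ∘ ζ) l (𝓝 (g x)) :=
    hg.tendsto.comp hζ
  exact ((hf'.mul (hcomp (h.hasDerivAt x hx).continuousAt)).sub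
    ((hcomp (h.hasDerivAt_deriv x hx).continuousAt).mul (hcomp hfx))).div
    (hcomp (h.hasDerivAt_scale x hx).continuousAt) (h.scale_pos x hx).ne'

theorem scaledWronskian_const_le_const (h : PositiveSolution a b θ σ α S u u' u'')
    (hx : x ∈ Ioo a b) {d₁ d₂ : ℝ} (hd : d₁ ≤ d₂) :
    scaledWronskian S u u' f (fun _ => d₁) x ≤ scaledWronskian S u u' f (fun _ => d₂) x := by
  have := h.pos x hx
  have := h.scale_pos x hx
  unfold scaledWronskian
  gcongr

theorem mapClusterPt_scaledWronskian_nhdsGT (h : PositiveSolution a b θ σ α S u u' u'')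
    (hf : PiecewiseC2 a b N f f' f'' fp fm) (hx : x ∈ Ioo a b) (hxN : x ∈ (N : Set ℝ)) :
    MapClusterPt (scaledWronskian S u u' f (fun _ => fp x) x) (𝓝[>] x)
      (scaledWronskian S u u' f f') := by
  obtain ⟨q, hxq, hq⟩ := mem_nhdsGT_iff_exists_Ioo_subset.1 <| inter_mem
    (nhdsWithin_le_nhds (Ioo_mem_nhds hx.1 hx.2)) (nhdsGT_le_nhdsNE x (N.compl_mem_nhdsNE x))
  obtain ⟨ζ, hζ, hf'ζ⟩ := exists_tendsto_deriv_nhdsGT hxq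
    (hf.continuousOn.mono fun z hz => hz.1.eq_or_lt.elim (· ▸ hx) fun h => (hq ⟨h, hz.2⟩).1)
    (fun z hz => hf.hasDerivAt z (hq hz)) (hf.hasDerivWithinAt_Ici x hxN)
  exact .of_comp hζ <| Tendsto.mapClusterPt <| h.tendsto_scaledWronskian_comp hx
    (hf.continuousOn.continuousAt (Ioo_mem_nhds hx.1 hx.2)) (hζ.mono_right nhdsWithin_le_nhds) hf'ζ

theorem mapClusterPt_scaledWronskian_nhdsLT (h : PositiveSolution a b θ σ α S u u' u'')
    (hf : PiecewiseC2 a b N f f' f'' fp fm) (hx : x ∈ Ioo a b) (hxN : x ∈ (N : Set ℝ)) :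
    MapClusterPt (scaledWronskian S u u' f (fun _ => fm x) x) (𝓝[<] x)
      (scaledWronskian S u u' f f') := by
  obtain ⟨p, hpx, hp⟩ := mem_nhdsLT_iff_exists_Ioo_subset.1 <| inter_mem
    (nhdsWithin_le_nhds (Ioo_mem_nhds hx.1 hx.2)) (nhdsLT_le_nhdsNE x (N.compl_mem_nhdsNE x))
  obtain ⟨ξ, hξ, hf'ξ⟩ := exists_tendsto_deriv_nhdsLT hpx
    (hf.continuousOn.mono fun z hz => hz.2.eq_or_lt.elim (· ▸ hx) fun h => (hp ⟨hz.1, h⟩).1)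
    (fun z hz => hf.hasDerivAt z (hp hz)) (hf.hasDerivWithinAt_Iic x hxN)
  exact .of_comp hξ <| Tendsto.mapClusterPt <| h.tendsto_scaledWronskian_comp hx
    (hf.continuousOn.continuousAt (Ioo_mem_nhds hx.1 hx.2)) (hξ.mono_right nhdsWithin_le_nhds) hf'ξ

theorem monotoneOn_scaledWronskian_diff (h : PositiveSolution a b θ σ α S u u' u'')
    (hf : PiecewiseC2 a b N f f' f'' fp fm) {p q : ℝ} (hpq : Ioo p q ⊆ Ioo a b)
    (hgen : ∀ x ∈ Ioo p q \ N, 0 < generator σ α θ f f' f'' x)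
    (hjump : ∀ x ∈ (N : Set ℝ), x ∈ Ioo p q → fm x ≤ fp x) :
    MonotoneOn (scaledWronskian S u u' f f') (Ioo p q \ N) := by
  refine monotoneOn_diff_finset_of_jumps ordConnected_Ioo (fun x hx y hy hxy hfree => ?_)
    fun n hn hnpq => ⟨_, _, h.scaledWronskian_const_le_const (hpq hnpq) (hjump n hn hnpq),
      h.mapClusterPt_scaledWronskian_nhdsLT hf (hpq hnpq) hn,
      h.mapClusterPt_scaledWronskian_nhdsGT hf (hpq hnpq) hn⟩
  have hsub : Icc x y ⊆ Ioo p q \ N := fun z hz => ⟨ordConnected_Ioo.out hx hy hz, hfree z hz⟩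
  refine (h.strictMonoOn_scaledWronskian_of_generator_pos (convex_Icc x y)
    (fun z hz => hpq (hsub hz).1)
    (fun z hz => hf.hasDerivAt z ⟨hpq (hsub hz).1, (hsub hz).2⟩)
    (fun z hz => hf.hasDerivAt_deriv z ⟨hpq (hsub hz).1, (hsub hz).2⟩)
    (fun z hz => hgen z (hsub (interior_subset hz))) ?_ ?_ hxy).le
  exacts [left_mem_Icc.2 hxy.le, right_mem_Icc.2 hxy.le]

theorem strictAntiOn_scaledWronskian_diff (h : PositiveSolution a b θ σ α S u u' u'')
    (hf : PiecewiseC2 a b N f f' f'' fp fm) {p q : ℝ} (hpq : Ioo p q ⊆ Ioo a b)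
    (hgen : ∀ x ∈ Ioo p q \ N, generator σ α θ f f' f'' x < 0)
    (hjump : ∀ x ∈ (N : Set ℝ), x ∈ Ioo p q → fp x ≤ fm x) :
    StrictAntiOn (scaledWronskian S u u' f f') (Ioo p q \ N) := by
  refine strictAntiOn_diff_finset_of_jumps ordConnected_Ioo (fun x hx y hy hxy hfree => ?_)
    fun n hn hnpq => ⟨_, _, h.scaledWronskian_const_le_const (hpq hnpq) (hjump n hn hnpq),
      h.mapClusterPt_scaledWronskian_nhdsLT hf (hpq hnpq) hn,
      h.mapClusterPt_scaledWronskian_nhdsGT hf (hpq hnpq) hn⟩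
  have hsub : Icc x y ⊆ Ioo p q \ N := fun z hz => ⟨ordConnected_Ioo.out hx hy hz, hfree z hz⟩
  refine h.strictAntiOn_scaledWronskian_of_generator_neg (convex_Icc x y)
    (fun z hz => hpq (hsub hz).1)
    (fun z hz => hf.hasDerivAt z ⟨hpq (hsub hz).1, (hsub hz).2⟩)
    (fun z hz => hf.hasDerivAt_deriv z ⟨hpq (hsub hz).1, (hsub hz).2⟩)
    (fun z hz => hgen z (hsub (interior_subset hz))) ?_ ?_ hxy
  exacts [left_mem_Icc.2 hxy.le, right_mem_Icc.2 hxy.le]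

theorem scaledWronskian_nonneg (h : PositiveSolution a b θ σ α S u u' u'') (hx : x ∈ Ioo a b)
    (hu' : 0 ≤ u' x) (hf' : 0 ≤ f' x) (hf : f x ≤ 0) : 0 ≤ scaledWronskian S u u' f f' x :=
  div_nonneg (by nlinarith [h.pos x hx]) (h.scale_pos x hx).le

theorem scaledWronskian_nonneg_of_monotoneOn (h : PositiveSolution a b θ σ α S u u' u'')
    (hf : PiecewiseC2 a b N f f' f'' fp fm) {p q : ℝ} (hp : p ∈ Ioo a b) (hqb : q ≤ b)
    (hmono : MonotoneOn (scaledWronskian S u u' f f') (Ioo p q \ N)) (hfp : f p ≤ 0)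
    (hu' : ∀ x ∈ Ioo a b, 0 ≤ u' x) (hf' : ∀ x ∈ Ioo a b \ N, 0 ≤ f' x) :
    ∀ x ∈ Ioo p q \ N, 0 ≤ scaledWronskian S u u' f f' x := by
  intro x hx
  have hcont : ContinuousAt (fun w => -(u' w * f w) / S w) p :=
    ((h.hasDerivAt_deriv p hp).continuousAt.mul
      (hf.continuousOn.continuousAt (Ioo_mem_nhds hp.1 hp.2))).neg.div
      (h.hasDerivAt_scale p hp).continuousAt (h.scale_pos p hp).ne'
  have h0 : 0 ≤ -(u' p * f p) / S p :=
    div_nonneg (neg_nonneg.2 (mul_nonpos_of_nonneg_of_nonpos (hu' p hp) hfp)) (h.scale_pos p hp).le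
  have hlim : Tendsto (fun w => -(u' w * f w) / S w) (𝓝[>] p) (𝓝 (-(u' p * f p) / S p)) :=
    hcont.tendsto.mono_left nhdsWithin_le_nhds
  -- near `p`, `L_u f ≥ -u' f / S` because `f' ≥ 0`, and the right side tends to a nonnegative limit
  refine h0.trans (le_of_tendsto hlim ?_)
  filter_upwards [Ioo_mem_nhdsGT hx.1.1, nhdsGT_le_nhdsNE p (N.compl_mem_nhdsNE p)] with w hw hwN
  have hwab : w ∈ Ioo a b := ⟨hp.1.trans hw.1, hw.2.trans (hx.1.2.trans_le hqb)⟩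
  calc -(u' w * f w) / S w ≤ scaledWronskian S u u' f f' w :=
        div_le_div_of_nonneg_right (by nlinarith [hf' w ⟨hwab, hwN⟩, h.pos w hwab])
          (h.scale_pos w hwab).le
    _ ≤ scaledWronskian S u u' f f' x := hmono ⟨⟨hw.1, hw.2.trans hx.1.2⟩, hwN⟩ hx hw.2.le

theorem tendsto_scaledWronskian_atBot (h : PositiveSolution a b θ σ α S u u' u'')
    (hf : PiecewiseC2 a b N f f' f'' fp fm) (hθ : 0 < θ) {K δ : ℝ} (hK : K ∈ Ioo a b)
    (hδ : δ < 0) (hgen : ∀ x ∈ Ioo K b \ N, generator σ α θ f f' f'' x ≤ δ)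
    (hnat : Tendsto (fun x => u' x / S x) (𝓝[<] b) atTop) :
    Tendsto (scaledWronskian S u u' f f') (𝓝[<] b) atBot := by
  obtain ⟨p, hpb, hp⟩ := mem_nhdsLT_iff_exists_Ioo_subset.1 <| inter_mem
    (Ioo_mem_nhdsLT hK.2) (nhdsLT_le_nhdsNE b (N.compl_mem_nhdsNE b))
  obtain ⟨y, hpy, hyb⟩ := exists_between (show p < b from hpb)
  have hsub : Ico y b ⊆ Ioo a b \ N := fun z hz =>
    have hz' := hp ⟨hpy.trans_le hz.1, hz.2⟩
    ⟨⟨hK.1.trans hz'.1.1, hz.2⟩, hz'.2⟩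
  obtain ⟨c, hθc⟩ : ∃ c, θ * c = δ / 2 := ⟨δ / (2 * θ), by field_simp⟩
  have hc : c < 0 := by nlinarith
  -- shifting `f` by `c` lowers `Ã_θ f` by `δ / 2`, which makes it negative on `(y, b)`
  have hanti : StrictAntiOn (scaledWronskian S u u' (fun x => f x + c) f') (Ico y b) :=
    h.strictAntiOn_scaledWronskian_of_generator_neg (convex_Ico y b) (fun z hz => (hsub hz).1)
      (fun z hz => (hf.hasDerivAt z (hsub hz)).add_const c)
      (fun z hz => hf.hasDerivAt_deriv z (hsub hz)) fun z hz => by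
        have hz := hgen z ⟨(hp ⟨hpy.trans_le (interior_subset hz).1, (interior_subset hz).2⟩).1,
          (hsub (interior_subset hz)).2⟩
        simp only [generator] at hz ⊢
        linarith [mul_add θ (f z) c]
  have hbound : ∀ x ∈ Ioo y b, scaledWronskian S u u' f f' x ≤
      (scaledWronskian S u u' f f' y - c * (u' y / S y)) + c * (u' x / S x) := fun x hx => by
    have := hanti ⟨le_rfl, hyb⟩ ⟨hx.1.le, hx.2⟩ hx.1
    rw [scaledWronskian_add_const, scaledWronskian_add_const] at this
    linarith
  refine tendsto_atBot_mono' _ (eventually_of_mem (Ioo_mem_nhdsLT hyb) hbound) ?_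
  exact tendsto_atBot_add_const_left _ _
    ((tendsto_const_mul_atBot_of_neg hc).2 hnat)

theorem hasDerivAt_div (h : PositiveSolution a b θ σ α S u u' u'') (hx : x ∈ Ioo a b)
    (hf : HasDerivAt f (f' x) x) :
    HasDerivAt (fun y => f y / u y) (S x / u x ^ 2 * scaledWronskian S u u' f f' x) x := by
  refine (hf.div (h.hasDerivAt x hx) (h.pos x hx).ne').congr_deriv ?_
  have := (h.scale_pos x hx).ne'
  unfold scaledWronskian
  field_simp

end PositiveSolution

theorem positiveSolution_exp_neg_integral {a b c θ : ℝ} {σ α u u' u'' : ℝ → ℝ}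
    (hc : c ∈ Ioo a b) (hσc : ContinuousOn σ (Ioo a b)) (hσ : ∀ x ∈ Ioo a b, 0 < σ x)
    (hαc : ContinuousOn α (Ioo a b)) (hu : ∀ x ∈ Ioo a b, 0 < u x)
    (hu' : ∀ x ∈ Ioo a b, HasDerivAt u (u' x) x) (hu'' : ∀ x ∈ Ioo a b, HasDerivAt u' (u'' x) x)
    (hgen : ∀ x ∈ Ioo a b, generator σ α θ u u' u'' x = 0) :
    PositiveSolution a b θ σ α (fun x => Real.exp (-∫ t in c..x, 2 * α t / σ t ^ 2)) u u' u'' where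
  sigma_ne_zero x hx := (hσ x hx).ne'
  scale_pos _ _ := Real.exp_pos _
  hasDerivAt_scale _ hx := hasDerivAt_exp_neg_integral
    ((continuousOn_const.mul hαc).div (hσc.pow 2) fun x hx => pow_ne_zero 2 (hσ x hx).ne') hc hx
  pos := hu
  hasDerivAt := hu'
  hasDerivAt_deriv := hu''
  generator_eq_zero := hgen

theorem unique_optimal_threshold_general
    (a b θ c : ℝ) (hθ : 0 < θ) (hc : c ∈ Ioo a b)
    (sigma alpha : ℝ → ℝ)
    (hsigc : ContinuousOn sigma (Ioo a b))
    (hsigpos : ∀ x ∈ Ioo a b, 0 < sigma x)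
    (halc : ContinuousOn alpha (Ioo a b))
    (ψ ψ' ψ'' : ℝ → ℝ)
    (hψpos : ∀ x ∈ Ioo a b, 0 < ψ x)
    (hψd : ∀ x ∈ Ioo a b, HasDerivAt ψ (ψ' x) x)
    (hψd2 : ∀ x ∈ Ioo a b, HasDerivAt ψ' (ψ'' x) x)
    (hψmono : StrictMonoOn ψ (Ioo a b))
    (hψODE : ∀ x ∈ Ioo a b,
      (1 / 2) * sigma x ^ 2 * ψ'' x + alpha x * ψ' x - θ * ψ x = 0)
    (N : Finset ℝ)
    (g g' g'' gp gm : ℝ → ℝ)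
    (hgc : ContinuousOn g (Ioo a b))
    (hgmono : MonotoneOn g (Ioo a b))
    (hgd : ∀ x ∈ Ioo a b \ N, HasDerivAt g (g' x) x)
    (hgd2 : ∀ x ∈ Ioo a b \ N, HasDerivAt g' (g'' x) x)
    (hgp : ∀ x ∈ (N : Set ℝ), HasDerivWithinAt g (gp x) (Ici x) x)
    (hgm : ∀ x ∈ (N : Set ℝ), HasDerivWithinAt g (gm x) (Iic x) x)
    (x₀ : ℝ) (hx₀ : x₀ ∈ Ioo a b)
    (hgneg : ∀ x ∈ Ioc a x₀, g x ≤ 0)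
    -- (i): unique sign change of `Ã_θ g` at `xh > x₀`
    (xh : ℝ) (hxh : xh ∈ Ioo x₀ b)
    (hApos : ∀ x ∈ Ioo x₀ xh \ N,
      0 < (1 / 2) * sigma x ^ 2 * g'' x + alpha x * g' x - θ * g x)
    (hAneg : ∀ x ∈ Ioo xh b \ N,
      (1 / 2) * sigma x ^ 2 * g'' x + alpha x * g' x - θ * g x < 0)
    -- (ii): jump conditions on `g'` at the points of `N`
    (hjump₁ : ∀ x ∈ (N : Set ℝ), x ∈ Ioo x₀ xh → gm x ≤ gp x)
    (hjump₂ : ∀ x ∈ (N : Set ℝ), x ∈ Ioo xh b → gp x ≤ gm x)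
    -- (iii): natural boundary behavior at `b`
    (hnat : Tendsto
      (fun x => ψ' x / Real.exp (-(∫ t in c..x, 2 * alpha t / sigma t ^ 2)))
      (nhdsWithin b (Iio b)) atTop)
    -- (iv): `sup_{(K,b)∖N} (Ã_θ g) < 0` for some `K ∈ (xh,b)`
    (K : ℝ) (hK : K ∈ Ioo xh b)
    (hsup : ∃ δ < (0 : ℝ), ∀ x ∈ Ioo K b \ N,
      (1 / 2) * sigma x ^ 2 * g'' x + alpha x * g' x - θ * g x ≤ δ) :
    (∀ x ∈ Ioc a x₀ \ N,
      0 ≤ (g' x * ψ x - ψ' x * g x) /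
        Real.exp (-(∫ t in c..x, 2 * alpha t / sigma t ^ 2))) ∧
    MonotoneOn
      (fun x => (g' x * ψ x - ψ' x * g x) /
        Real.exp (-(∫ t in c..x, 2 * alpha t / sigma t ^ 2)))
      (Ioo x₀ xh \ N) ∧
    StrictAntiOn
      (fun x => (g' x * ψ x - ψ' x * g x) /
        Real.exp (-(∫ t in c..x, 2 * alpha t / sigma t ^ 2)))
      (Ioo xh b \ N) ∧
    Tendsto
      (fun x => (g' x * ψ x - ψ' x * g x) /
        Real.exp (-(∫ t in c..x, 2 * alpha t / sigma t ^ 2)))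
      (nhdsWithin b (Iio b)) atBot ∧
    (∃ xstar : ℝ, xstar ∈ Ico xh b ∧
      (∀ y ∈ Ioo a b, g y / ψ y ≤ g xstar / ψ xstar) ∧
      (∀ y ∈ Ico xh b, (∀ z ∈ Ioo a b, g z / ψ z ≤ g y / ψ y) → y = xstar) ∧
      MonotoneOn (fun x => g x / ψ x) (Ioc a xstar) ∧
      StrictAntiOn (fun x => g x / ψ x) (Ico xstar b)) := by
  have hψ := positiveSolution_exp_neg_integral hc hsigc hsigpos halc hψpos hψd hψd2 hψODE
  have hg : PiecewiseC2 a b N g g' g'' gp gm := ⟨hgc, hgd, hgd2, hgp, hgm⟩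
  have hax₀ : a < x₀ := hx₀.1
  have hψ' : ∀ x ∈ Ioo a b, 0 ≤ ψ' x := fun x hx =>
    (hψd x hx).nonneg_of_monotoneOn (Ioo_mem_nhds hx.1 hx.2) hψmono.monotoneOn
  have hg' : ∀ x ∈ Ioo a b \ N, 0 ≤ g' x := fun x hx =>
    (hgd x hx).nonneg_of_monotoneOn (Ioo_mem_nhds hx.1.1 hx.1.2) hgmono
  have hL₁ : ∀ x ∈ Ioc a x₀ \ N, 0 ≤ scaledWronskian _ ψ ψ' g g' x := fun x hx =>
    have hxab : x ∈ Ioo a b := ⟨hx.1.1, hx.1.2.trans_lt hx₀.2⟩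
    hψ.scaledWronskian_nonneg hxab (hψ' x hxab) (hg' x ⟨hxab, hx.2⟩) (hgneg x hx.1)
  have hL₂ := hψ.monotoneOn_scaledWronskian_diff hg (Ioo_subset_Ioo hax₀.le hxh.2.le) hApos hjump₁
  have hL₃ := hψ.strictAntiOn_scaledWronskian_diff hg (Ioo_subset_Ioo_left (hax₀.trans hxh.1).le)
    hAneg hjump₂
  obtain ⟨δ, hδ, hδgen⟩ := hsup
  have hL₄ := hψ.tendsto_scaledWronskian_atBot hg hθ ⟨(hax₀.trans hxh.1).trans hK.1, hK.2⟩ hδ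
    hδgen hnat
  have hL₀ : ∀ x ∈ Ioo a xh \ N, 0 ≤ scaledWronskian _ ψ ψ' g g' x := fun x hx =>
    (le_or_gt x x₀).elim (fun hxx₀ => hL₁ x ⟨⟨hx.1.1, hxx₀⟩, hx.2⟩) fun hxx₀ =>
      hψ.scaledWronskian_nonneg_of_monotoneOn hg hx₀ hxh.2.le hL₂ (hgneg x₀ ⟨hax₀, le_rfl⟩) hψ'
        hg' x ⟨⟨hxx₀, hx.1.2⟩, hx.2⟩
  refine ⟨hL₁, hL₂, hL₃, hL₄, exists_optimal_threshold ⟨hax₀.trans hxh.1, hxh.2⟩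
    (hgc.div (fun x hx => (hψd x hx).continuousAt.continuousWithinAt) fun x hx => (hψpos x hx).ne')
    (fun x hx => hψ.hasDerivAt_div hx.1 (hgd x hx)) (fun x hx => div_pos (hψ.scale_pos x hx)
      (pow_pos (hψpos x hx) 2)) hL₀ hL₃ hL₄⟩

/-- The deterministic core of the paper's Lemma 3.4.  Let `ψ` be the increasing
fundamental solution of `Ã_θ ψ = 0` on `I = (a,b)` and let `g` be a continuous,
nondecreasing payoff, C² off a finite set `N`, negative below its unique break-even
point `x₀` and positive above it.  Assuming a single sign change of `Ã_θ g` at `xh`,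
the jump conditions on `g'` at `N`, `ψ'/S' → ∞` at `b` and
`sup_{(K,b)∖N} Ã_θ g < 0`, the function `L_ψ g = (g'ψ − ψ'g)/S'` is nonnegative on
`(a,x₀]`, nondecreasing on `(x₀,xh)`, strictly decreasing on `(xh,b)∖N` with limit
`−∞` at `b`, and there is a unique maximizer `x* ∈ [xh,b)` of `g/ψ` over `I`;
moreover `g/ψ` is nondecreasing on `(a,x*]` and strictly decreasing on `[x*,b)`. -/
theorem unique_optimal_threshold
    (a b θ c : ℝ) (hθ : 0 < θ) (hc : c ∈ Ioo a b)
    (sigma alpha : ℝ → ℝ)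
    (hsigc : ContinuousOn sigma (Ioo a b))
    (hsigpos : ∀ x ∈ Ioo a b, 0 < sigma x)
    (halc : ContinuousOn alpha (Ioo a b))
    (ψ ψ' ψ'' : ℝ → ℝ)
    (hψpos : ∀ x ∈ Ioo a b, 0 < ψ x)
    (hψd : ∀ x ∈ Ioo a b, HasDerivAt ψ (ψ' x) x)
    (hψd2 : ∀ x ∈ Ioo a b, HasDerivAt ψ' (ψ'' x) x)
    (hψ''c : ContinuousOn ψ'' (Ioo a b))
    (hψmono : StrictMonoOn ψ (Ioo a b))
    (hψODE : ∀ x ∈ Ioo a b,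
      (1 / 2) * sigma x ^ 2 * ψ'' x + alpha x * ψ' x - θ * ψ x = 0)
    (N : Finset ℝ) (hN : (N : Set ℝ) ⊆ Ioo a b)
    (g g' g'' gp gm : ℝ → ℝ)
    (hgc : ContinuousOn g (Ioo a b))
    (hgmono : MonotoneOn g (Ioo a b))
    (hgd : ∀ x ∈ Ioo a b \ N, HasDerivAt g (g' x) x)
    (hgd2 : ∀ x ∈ Ioo a b \ N, HasDerivAt g' (g'' x) x)
    (hg'c : ContinuousOn g' (Ioo a b \ N))
    (hg''c : ContinuousOn g'' (Ioo a b \ N))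
    (hgp : ∀ x ∈ (N : Set ℝ), HasDerivWithinAt g (gp x) (Ici x) x)
    (hgm : ∀ x ∈ (N : Set ℝ), HasDerivWithinAt g (gm x) (Iic x) x)
    (x₀ : ℝ) (hx₀ : x₀ ∈ Ioo a b) (hgx₀ : g x₀ = 0)
    (hgneg : ∀ x ∈ Ioc a x₀, g x ≤ 0)
    (hgposn : ∀ x ∈ Ioo x₀ b, 0 < g x)
    -- (i): unique sign change of `Ã_θ g` at `xh > x₀`
    (xh : ℝ) (hxh : xh ∈ Ioo x₀ b)
    (hApos : ∀ x ∈ Ioo x₀ xh \ N,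
      0 < (1 / 2) * sigma x ^ 2 * g'' x + alpha x * g' x - θ * g x)
    (hAneg : ∀ x ∈ Ioo xh b \ N,
      (1 / 2) * sigma x ^ 2 * g'' x + alpha x * g' x - θ * g x < 0)
    -- (ii): jump conditions on `g'` at the points of `N`
    (hjump₁ : ∀ x ∈ (N : Set ℝ), x ∈ Ioo x₀ xh → gm x ≤ gp x)
    (hjump₂ : ∀ x ∈ (N : Set ℝ), x ∈ Ioo xh b → gp x ≤ gm x)
    -- (iii): natural boundary behavior at `b`
    (hnat : Tendsto
      (fun x => ψ' x / Real.exp (-(∫ t in c..x, 2 * alpha t / sigma t ^ 2)))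
      (nhdsWithin b (Iio b)) atTop)
    -- (iv): `sup_{(K,b)∖N} (Ã_θ g) < 0` for some `K ∈ (xh,b)`
    (K : ℝ) (hK : K ∈ Ioo xh b)
    (hsup : ∃ δ < (0 : ℝ), ∀ x ∈ Ioo K b \ N,
      (1 / 2) * sigma x ^ 2 * g'' x + alpha x * g' x - θ * g x ≤ δ) :
    (∀ x ∈ Ioc a x₀ \ N,
      0 ≤ (g' x * ψ x - ψ' x * g x) /
        Real.exp (-(∫ t in c..x, 2 * alpha t / sigma t ^ 2))) ∧
    MonotoneOn
      (fun x => (g' x * ψ x - ψ' x * g x) /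
        Real.exp (-(∫ t in c..x, 2 * alpha t / sigma t ^ 2)))
      (Ioo x₀ xh \ N) ∧
    StrictAntiOn
      (fun x => (g' x * ψ x - ψ' x * g x) /
        Real.exp (-(∫ t in c..x, 2 * alpha t / sigma t ^ 2)))
      (Ioo xh b \ N) ∧
    Tendsto
      (fun x => (g' x * ψ x - ψ' x * g x) /
        Real.exp (-(∫ t in c..x, 2 * alpha t / sigma t ^ 2)))
      (nhdsWithin b (Iio b)) atBot ∧
    (∃ xstar : ℝ, xstar ∈ Ico xh b ∧
      (∀ y ∈ Ioo a b, g y / ψ y ≤ g xstar / ψ xstar) ∧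
      (∀ y ∈ Ico xh b, (∀ z ∈ Ioo a b, g z / ψ z ≤ g y / ψ y) → y = xstar) ∧
      MonotoneOn (fun x => g x / ψ x) (Ioc a xstar) ∧
      StrictAntiOn (fun x => g x / ψ x) (Ico xstar b)) :=
  unique_optimal_threshold_general a b θ c hθ hc sigma alpha hsigc hsigpos halc ψ ψ' ψ'' hψpos hψd
    hψd2 hψmono hψODE N g g' g'' gp gm hgc hgmono hgd hgd2 hgp hgm x₀ hx₀ hgneg xh hxh hApos hAneg
    hjump₁ hjump₂ hnat K hK hsup
end

section
/- Let g : I → ℝ and suppose x* ∈ [x,b) satisfies g(y)/ψ(y) ≤ g(x*)/ψ(x*) for all y ∈ [x,b). Then, with t* = (1/r)·ln(ψ(x*)/ψ(x)) ≥ 0, one has X̂(t*) = x* and sup_{t≥0} e^{−rt} g(X̂(t)) = e^{−rt*} g(X̂(t*)) = ψ(x)·g(x*)/ψ(x*); that is, the value of the deterministic timing problem V̂(x) = sup_{t≥0} e^{−rt} g(X̂(t)) equals ψ(x)·sup_{y ∈ [x,b)} g(y)/ψ(y) and is attained at t*. -/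
/-!
Along the risk-adjusted dynamics `X' = r ψ(X)/ψ'(X)` the chain rule gives `(ψ ∘ X)' = r (ψ ∘ X)`,
so `ψ(X t) = ψ(x) e^{rt}`. Hence the discount factor is `e^{-rt} = ψ(x)/ψ(X t)` and
`e^{-rt} g(X t) = ψ(x) · (g/ψ)(X t)`. Since `ψ` is strictly increasing, `X` sweeps out `[x, b)`
and reaches `x*` exactly when `e^{rt} = ψ(x*)/ψ(x)`, so maximizing the discounted payoff over `t`
is maximizing `g/ψ` over `[x, b)`.
-/

open Set Real

theorem eq_mul_exp_of_hasDerivAt_mul_self {f : ℝ → ℝ} {r : ℝ}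
    (hf : ∀ t, 0 ≤ t → HasDerivAt f (r * f t) t) {t : ℝ} (ht : 0 ≤ t) :
    f t = f 0 * exp (r * t) := by
  have hderiv : ∀ s, 0 ≤ s → HasDerivAt (fun s => f s * exp (-r * s)) 0 s := by
    intro s hs
    have hexp : HasDerivAt (fun s => exp (-r * s)) (exp (-r * s) * -r) s := by
      simpa using ((hasDerivAt_id s).const_mul (-r)).exp
    exact ((hf s hs).mul hexp).congr_deriv (by ring)
  have hconst : f t * exp (-r * t) = f 0 * exp (-r * 0) :=
    constant_of_has_deriv_right_zero (fun s hs => (hderiv s hs.1).continuousAt.continuousWithinAt)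
      (fun s hs => (hderiv s hs.1).hasDerivWithinAt) t (right_mem_Icc.2 ht)
  calc f t = f t * exp (-r * t) * exp (r * t) := by
        rw [mul_assoc, ← exp_add, neg_mul, neg_add_cancel, exp_zero, mul_one]
    _ = f 0 * exp (r * t) := by rw [hconst, mul_zero, exp_zero, mul_one]

theorem comp_eq_mul_exp_of_hasDerivAt_div_deriv {ψ ψ' X : ℝ → ℝ} {s : Set ℝ} {r : ℝ}
    (hψ : ∀ y ∈ s, HasDerivAt ψ (ψ' y) y) (hψ' : ∀ y ∈ s, ψ' y ≠ 0)
    (hXmem : ∀ t, 0 ≤ t → X t ∈ s)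
    (hX : ∀ t, 0 ≤ t → HasDerivAt X (r * ψ (X t) / ψ' (X t)) t) {t : ℝ} (ht : 0 ≤ t) :
    ψ (X t) = ψ (X 0) * exp (r * t) := by
  refine eq_mul_exp_of_hasDerivAt_mul_self (f := ψ ∘ X) (fun s hs => ?_) ht
  refine ((hψ _ (hXmem s hs)).comp s (hX s hs)).congr_deriv ?_
  rw [Function.comp_apply, mul_div_cancel₀ _ (hψ' _ (hXmem s hs))]

theorem strictMonoOn_Ioo_of_hasDerivAt_pos {f f' : ℝ → ℝ} {a b : ℝ}
    (hf : ∀ x ∈ Ioo a b, HasDerivAt f (f' x) x) (hf' : ∀ x ∈ Ioo a b, 0 < f' x) :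
    StrictMonoOn f (Ioo a b) :=
  strictMonoOn_of_hasDerivWithinAt_pos (convex_Ioo a b)
    (fun x hx => (hf x hx).continuousAt.continuousWithinAt)
    (fun x hx => (hf x (interior_subset hx)).hasDerivWithinAt)
    (fun x hx => hf' x (interior_subset hx))

theorem mul_exp_mul_one_div_mul_log_div {c d r : ℝ} (hc : 0 < c) (hd : 0 < d) (hr : r ≠ 0) :
    c * exp (r * ((1 / r) * log (d / c))) = d := by
  rw [← mul_assoc, mul_one_div_cancel hr, one_mul, exp_log (div_pos hd hc),
    mul_div_cancel₀ _ hc.ne']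

/-- Certainty-equivalent valuation (core of the paper's Theorem 6.1):
if `x* ∈ [x,b)` maximizes `g/ψ` over `[x,b)`, then with
`t* = (1/r)·ln(ψ(x*)/ψ(x)) ≥ 0` one has `X̂(t*) = x*` and the deterministic value
`V̂(x) = sup_{t ≥ 0} e^{−rt} g(X̂(t))` is attained at `t*` and equals
`ψ(x)·g(x*)/ψ(x*)`. -/
theorem certainty_equivalent_valuation
    (a b r : ℝ) (hr : 0 < r)
    (ψ ψ' : ℝ → ℝ)
    (hψpos : ∀ x ∈ Ioo a b, 0 < ψ x)
    (hψd : ∀ x ∈ Ioo a b, HasDerivAt ψ (ψ' x) x)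
    (hψ'pos : ∀ x ∈ Ioo a b, 0 < ψ' x)
    (x : ℝ) (hx : x ∈ Ioo a b)
    (X : ℝ → ℝ)
    (hX0 : X 0 = x)
    (hXmem : ∀ t : ℝ, 0 ≤ t → X t ∈ Ioo a b)
    (hXd : ∀ t : ℝ, 0 ≤ t → HasDerivAt X (r * ψ (X t) / ψ' (X t)) t)
    (g : ℝ → ℝ)
    (xstar : ℝ) (hxstar : xstar ∈ Ico x b)
    (hmax : ∀ y ∈ Ico x b, g y / ψ y ≤ g xstar / ψ xstar) :
    0 ≤ (1 / r) * Real.log (ψ xstar / ψ x) ∧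
    X ((1 / r) * Real.log (ψ xstar / ψ x)) = xstar ∧
    (∀ t : ℝ, 0 ≤ t →
      Real.exp (-r * t) * g (X t) ≤
        Real.exp (-r * ((1 / r) * Real.log (ψ xstar / ψ x))) *
          g (X ((1 / r) * Real.log (ψ xstar / ψ x)))) ∧
    Real.exp (-r * ((1 / r) * Real.log (ψ xstar / ψ x))) *
        g (X ((1 / r) * Real.log (ψ xstar / ψ x))) =
      ψ x * (g xstar / ψ xstar) := by
  have hxstarI : xstar ∈ Ioo a b := ⟨hx.1.trans_le hxstar.1, hxstar.2⟩
  have hψx := hψpos x hx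
  have hmono := strictMonoOn_Ioo_of_hasDerivAt_pos hψd hψ'pos
  have hgrowth : ∀ t, 0 ≤ t → ψ (X t) = ψ x * exp (r * t) := fun t ht => hX0 ▸
    comp_eq_mul_exp_of_hasDerivAt_div_deriv hψd (fun y hy => (hψ'pos y hy).ne') hXmem hXd ht
  have hdiscount : ∀ t, 0 ≤ t → exp (-r * t) * g (X t) = ψ x * (g (X t) / ψ (X t)) := by
    intro t ht
    rw [hgrowth t ht, neg_mul, exp_neg]
    field_simp
  have hXIco : ∀ t, 0 ≤ t → X t ∈ Ico x b := fun t ht =>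
    ⟨(hmono.le_iff_le hx (hXmem t ht)).1 <| by
      rw [hgrowth t ht]; exact le_mul_of_one_le_right hψx.le (one_le_exp (by positivity)),
     (hXmem t ht).2⟩
  set tstar := (1 / r) * log (ψ xstar / ψ x)
  have htstar : 0 ≤ tstar := mul_nonneg (by positivity) <| log_nonneg <|
    (one_le_div hψx).2 ((hmono.le_iff_le hx hxstarI).2 hxstar.1)
  have hXtstar : X tstar = xstar := hmono.injOn (hXmem tstar htstar) hxstarI <| by
    rw [hgrowth tstar htstar, mul_exp_mul_one_div_mul_log_div hψx (hψpos xstar hxstarI) hr.ne']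
  refine ⟨htstar, hXtstar, fun t ht => ?_, by rw [hdiscount tstar htstar, hXtstar]⟩
  rw [hdiscount t ht, hdiscount tstar htstar, hXtstar]
  exact mul_le_mul_of_nonneg_left (hmax _ (hXIco t ht)) hψx.le
end

section
/- Assume λ > 0. For θ > 0 let k̃_θ denote the unique positive root of (1/2)σ²k² + (μ + γλm̄)k − θ = 0, i.e. k̃_θ = −(μ+γλm̄)/σ² + √(((μ+γλm̄)/σ²)² + 2θ/σ²). Then the unique positive root k₁ of F satisfies k̃_r < k₁ < k̃_{r+λ}. -/
open Set MeasureTheory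

/-! The defining equation says `Q(k₁) = r + λ (1 - I)` with `Q(k) = σ²k²/2 + (μ + γλm̄)k` and
`I = ∫ exp(-γ z k₁) 𝔪(dz)`. Since `𝔪` lives on `(0, ∞)`, `0 < I < 1`, so `r < Q(k₁) < r + λ`; as `Q`
is increasing to the right of its vertex, this places `k₁` strictly between the positive roots of
`Q = r` and `Q = r + λ`. -/

section Integral

variable {α : Type*} [MeasurableSpace α] {μ : Measure α} [IsProbabilityMeasure μ]

theorem integral_lt_of_ae_lt_const {f : α → ℝ} {c : ℝ} (hf : Integrable f μ)
    (h : ∀ᵐ x ∂μ, f x < c) : ∫ x, f x ∂μ < c := by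
  have hnonneg : 0 ≤ᵐ[μ] fun x => c - f x := h.mono fun x hx => sub_nonneg.mpr hx.le
  have hgap : ∫ x, (c - f x) ∂μ ≠ 0 := by
    rw [Ne, integral_eq_zero_iff_of_nonneg_ae hnonneg ((integrable_const c).sub hf)]
    intro hzero
    obtain ⟨x, hlt, heq⟩ := (h.and hzero).exists
    simp only [Pi.zero_apply, sub_eq_zero] at heq
    exact hlt.ne' heq
  have hpos := lt_of_le_of_ne (integral_nonneg_of_ae hnonneg) hgap.symm
  rw [integral_sub (integrable_const c) hf, integral_const, probReal_univ, one_smul] at hpos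
  linarith

theorem integral_exp_neg_mem_Ioo {f : α → ℝ} (hf : AEMeasurable f μ)
    (hpos : ∀ᵐ x ∂μ, 0 < f x) : ∫ x, Real.exp (-f x) ∂μ ∈ Ioo 0 1 := by
  have hlt : ∀ᵐ x ∂μ, Real.exp (-f x) < 1 :=
    hpos.mono fun x hx => Real.exp_lt_one_iff.mpr (neg_lt_zero.mpr hx)
  have hint : Integrable (fun x => Real.exp (-f x)) μ :=
    Integrable.of_bound hf.neg.exp.aestronglyMeasurable 1 <| hlt.mono fun x hx => by
      rw [Real.norm_of_nonneg (Real.exp_pos _).le]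
      exact hx.le
  exact ⟨integral_exp_pos hint, integral_lt_of_ae_lt_const hint hlt⟩

end Integral

section QuadraticRoot

/-- The paper's `k̃_θ` (with `a = σ²`): the larger root of `a k² / 2 + b k = θ`. -/
noncomputable def quadPosRoot (a b θ : ℝ) : ℝ :=
  -(b / a) + Real.sqrt ((b / a) ^ 2 + 2 * θ / a)

variable {a b θ k : ℝ}

theorem sq_add_div_sub_eq_mul (ha : a ≠ 0) :
    (k + b / a) ^ 2 - ((b / a) ^ 2 + 2 * θ / a) = 2 / a * (1 / 2 * a * k ^ 2 + b * k - θ) := by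
  field_simp
  ring

theorem quadPosRoot_lt (ha : 0 < a) (hk : 0 < a * k + b) (hθ : θ < 1 / 2 * a * k ^ 2 + b * k) :
    quadPosRoot a b θ < k := by
  have hk' : 0 < k + b / a := by
    rw [← mul_pos_iff_of_pos_left ha, mul_add, mul_div_cancel₀ b ha.ne']
    exact hk
  have hgap := sq_add_div_sub_eq_mul (k := k) (b := b) (θ := θ) ha.ne'
  have : Real.sqrt ((b / a) ^ 2 + 2 * θ / a) < k + b / a := by
    rw [Real.sqrt_lt' hk']
    nlinarith [div_pos two_pos ha]
  unfold quadPosRoot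
  linarith

theorem lt_quadPosRoot (ha : 0 < a) (hk : 0 ≤ a * k + b) (hθ : 1 / 2 * a * k ^ 2 + b * k < θ) :
    k < quadPosRoot a b θ := by
  have hk' : 0 ≤ k + b / a := by
    rw [← mul_nonneg_iff_of_pos_left ha, mul_add, mul_div_cancel₀ b ha.ne']
    exact hk
  have hgap := sq_add_div_sub_eq_mul (k := k) (b := b) (θ := θ) ha.ne'
  have : k + b / a < Real.sqrt ((b / a) ^ 2 + 2 * θ / a) := by
    rw [Real.lt_sqrt hk']
    nlinarith [div_pos two_pos ha]
  unfold quadPosRoot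
  linarith

end QuadraticRoot

theorem arithmetic_root_sandwich_general
    (sigma gamma mu lam r : ℝ)
    (hsigma : 0 < sigma) (hgamma : 0 < gamma) (hlam : 0 < lam) (hr : 0 < r)
    (m : Measure ℝ) [IsProbabilityMeasure m]
    (hm : m (Ioi 0)ᶜ = 0)
    (mbar : ℝ)
    (k₁ : ℝ) (hk₁pos : 0 < k₁)
    (hk₁root : 1 / 2 * sigma ^ 2 * k₁ ^ 2 + (mu + gamma * lam * mbar) * k₁ +
      lam * ∫ z, Real.exp (-(gamma * z * k₁)) ∂m - (r + lam) = 0) :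
    -((mu + gamma * lam * mbar) / sigma ^ 2) +
        Real.sqrt (((mu + gamma * lam * mbar) / sigma ^ 2) ^ 2 + 2 * r / sigma ^ 2)
      < k₁ ∧
    k₁ < -((mu + gamma * lam * mbar) / sigma ^ 2) +
        Real.sqrt (((mu + gamma * lam * mbar) / sigma ^ 2) ^ 2 +
          2 * (r + lam) / sigma ^ 2) := by
  set b := mu + gamma * lam * mbar
  have hσ2 : 0 < sigma ^ 2 := by positivity
  have hsupp : ∀ᵐ z ∂m, 0 < gamma * z * k₁ := by
    filter_upwards [mem_ae_iff.mpr hm] with z (hz : 0 < z)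
    positivity
  obtain ⟨hI₀, hI₁⟩ := integral_exp_neg_mem_Ioo (by fun_prop) hsupp
  have hlower : r < 1 / 2 * sigma ^ 2 * k₁ ^ 2 + b * k₁ := by nlinarith
  have hupper : 1 / 2 * sigma ^ 2 * k₁ ^ 2 + b * k₁ < r + lam := by nlinarith
  have hvertex : 0 < sigma ^ 2 * k₁ + b := by nlinarith
  exact ⟨quadPosRoot_lt hσ2 hvertex hlower, lt_quadPosRoot hσ2 hvertex.le hupper⟩

/-- Sandwich for the positive root of the arithmetic characteristic equation
(Lemma 3.2 of the paper, Section 7.1): if `λ > 0` and `k̃_θ` denotes the positive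
root of `(1/2)σ²k² + (μ+γλm̄)k − θ = 0`, then `k̃_r < k₁ < k̃_{r+λ}`. -/
theorem arithmetic_root_sandwich
    (sigma gamma mu lam r : ℝ)
    (hsigma : 0 < sigma) (hgamma : 0 < gamma) (hlam : 0 < lam) (hr : 0 < r)
    (m : Measure ℝ) [IsProbabilityMeasure m]
    (hm : m (Ioi 0)ᶜ = 0)
    (hint : Integrable (fun z => z) m)
    (mbar : ℝ) (hmbar : mbar = ∫ z, z ∂m)
    (k₁ : ℝ) (hk₁pos : 0 < k₁)
    (hk₁root : 1 / 2 * sigma ^ 2 * k₁ ^ 2 + (mu + gamma * lam * mbar) * k₁ +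
      lam * ∫ z, Real.exp (-(gamma * z * k₁)) ∂m - (r + lam) = 0) :
    -((mu + gamma * lam * mbar) / sigma ^ 2) +
        Real.sqrt (((mu + gamma * lam * mbar) / sigma ^ 2) ^ 2 + 2 * r / sigma ^ 2)
      < k₁ ∧
    k₁ < -((mu + gamma * lam * mbar) / sigma ^ 2) +
        Real.sqrt (((mu + gamma * lam * mbar) / sigma ^ 2) ^ 2 +
          2 * (r + lam) / sigma ^ 2) :=
  arithmetic_root_sandwich_general sigma gamma mu lam r hsigma hgamma hlam hr m hm mbar k₁ hk₁pos
    hk₁root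
end

section
/- Define the jump-risk adjusted discount rate θ* = r + λ∫₀^∞ (1 − e^{−γzk₁}) 𝔪(dz). Then (1/2)σ²k₁² + (μ + γλm̄)k₁ − θ* = 0, i.e. k₁ is the positive root of the characteristic equation of the associated continuous diffusion discounted at rate θ*; moreover, if λ > 0 then θ* ∈ (r, r+λ). -/
open Set MeasureTheory

/-! Writing `E = ∫ e^{-γzk₁} 𝔪(dz)`, one has `θ* = r + λ(1 - E)`, so the first claim is the
root equation for `k₁` rearranged. Since `𝔪` lives on `(0,∞)` and `k₁ > 0`, the integrand
`e^{-γzk₁}` takes values in `(0,1)` almost surely, hence `E ∈ (0,1)` and `θ* ∈ (r, r+λ)`. -/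

namespace MeasureTheory

variable {α : Type*} [MeasurableSpace α] {μ : Measure α} {f : α → ℝ}

lemma integral_pos_of_ae_pos [NeZero μ] (hf : ∀ᵐ x ∂μ, 0 < f x) (hfi : Integrable f μ) :
    0 < ∫ x, f x ∂μ := by
  refine (integral_nonneg_of_ae (hf.mono fun _ h ↦ h.le)).lt_of_ne' fun h0 ↦ ?_
  have hzero := (integral_eq_zero_iff_of_nonneg_ae (hf.mono fun _ h ↦ h.le) hfi).mp h0
  obtain ⟨x, hx, hx0⟩ := (hf.and hzero).exists
  exact hx.ne' hx0

variable [IsProbabilityMeasure μ]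

lemma integral_one_sub (hf : Integrable f μ) : ∫ x, (1 - f x) ∂μ = 1 - ∫ x, f x ∂μ := by
  simp [integral_sub (integrable_const 1) hf]

lemma integral_mem_Ioo_of_ae_mem_Ioo (hf : ∀ᵐ x ∂μ, f x ∈ Ioo 0 1) (hfi : Integrable f μ) :
    ∫ x, f x ∂μ ∈ Ioo 0 1 := by
  have hlt : 0 < ∫ x, (1 - f x) ∂μ :=
    integral_pos_of_ae_pos (hf.mono fun _ h ↦ sub_pos.mpr h.2) ((integrable_const 1).sub hfi)
  rw [integral_one_sub hfi] at hlt
  exact ⟨integral_pos_of_ae_pos (hf.mono fun _ h ↦ h.1) hfi, sub_pos.mp hlt⟩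

end MeasureTheory

theorem arithmetic_jump_risk_adjusted_rate_general
    (sigma gamma mu lam r : ℝ)
    (hgamma : 0 < gamma)
    (m : Measure ℝ) [IsProbabilityMeasure m]
    (hm : m (Ioi 0)ᶜ = 0)
    (mbar : ℝ)
    (k₁ : ℝ) (hk₁pos : 0 < k₁)
    (hk₁root : 1 / 2 * sigma ^ 2 * k₁ ^ 2 + (mu + gamma * lam * mbar) * k₁ +
      lam * ∫ z, Real.exp (-(gamma * z * k₁)) ∂m - (r + lam) = 0) :
    1 / 2 * sigma ^ 2 * k₁ ^ 2 + (mu + gamma * lam * mbar) * k₁ -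
      (r + lam * ∫ z, (1 - Real.exp (-(gamma * z * k₁))) ∂m) = 0 ∧
    (0 < lam →
      (r + lam * ∫ z, (1 - Real.exp (-(gamma * z * k₁))) ∂m) ∈ Ioo r (r + lam)) := by
  have hexp : ∀ᵐ z ∂m, Real.exp (-(gamma * z * k₁)) ∈ Ioo 0 1 := by
    filter_upwards [mem_ae_iff.mpr hm] with z (hz : 0 < z)
    exact ⟨Real.exp_pos _, Real.exp_lt_one_iff.mpr (neg_lt_zero.mpr (by positivity))⟩
  have hint : Integrable (fun z ↦ Real.exp (-(gamma * z * k₁))) m :=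
    .of_bound (by fun_prop) 1 (hexp.mono fun _ h ↦ by simpa [abs_of_pos h.1] using h.2.le)
  obtain ⟨hE₀, hE₁⟩ := integral_mem_Ioo_of_ae_mem_Ioo hexp hint
  rw [integral_one_sub hint]
  refine ⟨by linarith, fun hlam ↦ ⟨?_, ?_⟩⟩
  · linarith [mul_pos hlam (sub_pos.mpr hE₁)]
  · linarith [mul_pos hlam hE₀]

/-- Jump-risk adjusted discount rate (arithmetic case of Corollary 4.2):
with `θ* = r + λ∫(1 − e^{−γzk₁})𝔪(dz)` one has
`(1/2)σ²k₁² + (μ+γλm̄)k₁ − θ* = 0`, and if `λ > 0` then `θ* ∈ (r, r+λ)`. -/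
theorem arithmetic_jump_risk_adjusted_rate
    (sigma gamma mu lam r : ℝ)
    (hsigma : 0 < sigma) (hgamma : 0 < gamma) (hlam : 0 ≤ lam) (hr : 0 < r)
    (m : Measure ℝ) [IsProbabilityMeasure m]
    (hm : m (Ioi 0)ᶜ = 0)
    (hint : Integrable (fun z => z) m)
    (mbar : ℝ) (hmbar : mbar = ∫ z, z ∂m)
    (k₁ : ℝ) (hk₁pos : 0 < k₁)
    (hk₁root : 1 / 2 * sigma ^ 2 * k₁ ^ 2 + (mu + gamma * lam * mbar) * k₁ +
      lam * ∫ z, Real.exp (-(gamma * z * k₁)) ∂m - (r + lam) = 0) :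
    1 / 2 * sigma ^ 2 * k₁ ^ 2 + (mu + gamma * lam * mbar) * k₁ -
      (r + lam * ∫ z, (1 - Real.exp (-(gamma * z * k₁))) ∂m) = 0 ∧
    (0 < lam →
      (r + lam * ∫ z, (1 - Real.exp (-(gamma * z * k₁))) ∂m) ∈ Ioo r (r + lam)) :=
  arithmetic_jump_risk_adjusted_rate_general sigma gamma mu lam r hgamma m hm mbar k₁ hk₁pos hk₁root
end

section
/- The unique positive root k₁ = k₁(σ) of F is strictly decreasing in the volatility: if 0 < σ < σ̂ (with μ, γ, λ, r, 𝔪 fixed) then k₁(σ̂) < k₁(σ). -/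
/-!
`F_σ` is convex on `[0, ∞)`, being a quadratic plus `λ` times a Laplace transform, and
`F_σ(0) = -r < 0`. Raising the volatility raises `F` off `k = 0`, so `F_σ(k₁(σ̂)) < 0`.
A convex function that is negative at both ends of `[0, k₁(σ̂)]` is negative on all of it,
so its root `k₁(σ)` lies beyond `k₁(σ̂)`.
-/

open Set MeasureTheory

lemma ConvexOn.lt_of_apply_eq_zero {f : ℝ → ℝ} (hf : ConvexOn ℝ (Ici 0) f) (h0 : f 0 < 0)
    {a b : ℝ} (ha : 0 ≤ a) (hb : 0 ≤ b) (hfa : f a = 0) (hfb : f b < 0) : b < a := by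
  by_contra! hab
  have hneg : segment ℝ 0 b ⊆ {x ∈ Ici 0 | f x < 0} :=
    (hf.convex_lt 0).segment_subset ⟨self_mem_Ici, h0⟩ ⟨hb, hfb⟩
  have ha_mem : a ∈ segment ℝ 0 b := by
    rw [segment_eq_Icc hb]
    exact ⟨ha, hab⟩
  exact (hneg ha_mem).2.ne hfa

section LaplaceTransform

variable {m : Measure ℝ} [IsFiniteMeasure m] {gamma : ℝ}

lemma integrable_exp_neg_mul_mul (hm : ∀ᵐ z ∂m, 0 ≤ z) (hgamma : 0 ≤ gamma) {k : ℝ}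
    (hk : 0 ≤ k) : Integrable (fun z => Real.exp (-(gamma * z * k))) m := by
  refine Integrable.of_bound (by fun_prop) 1 ?_
  filter_upwards [hm] with z hz
  rw [Real.norm_of_nonneg (Real.exp_pos _).le, Real.exp_le_one_iff, neg_nonpos]
  positivity

lemma convexOn_integral_exp_neg_mul_mul (hm : ∀ᵐ z ∂m, 0 ≤ z) (hgamma : 0 ≤ gamma) :
    ConvexOn ℝ (Ici 0) fun k => ∫ z, Real.exp (-(gamma * z * k)) ∂m := by
  refine ⟨convex_Ici 0, fun x hx y hy a b ha hb hab => ?_⟩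
  have hpointwise (z : ℝ) : Real.exp (-(gamma * z * (a * x + b * y))) ≤
      a * Real.exp (-(gamma * z * x)) + b * Real.exp (-(gamma * z * y)) := by
    have h := convexOn_exp.2 (mem_univ (-(gamma * z * x))) (mem_univ (-(gamma * z * y))) ha hb hab
    simp only [smul_eq_mul] at h
    exact (congrArg Real.exp (by ring)).trans_le h
  have hint {k : ℝ} (hk : k ∈ Ici 0) := integrable_exp_neg_mul_mul hm hgamma hk
  simp only [smul_eq_mul]
  rw [← integral_const_mul, ← integral_const_mul, ← integral_add ((hint hx).const_mul a)
    ((hint hy).const_mul b)]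
  exact integral_mono (hint (convex_Ici 0 hx hy ha hb hab))
    (((hint hx).const_mul a).add ((hint hy).const_mul b)) hpointwise

end LaplaceTransform

/-- The function `F` of the paper at volatility `s`. -/
noncomputable def characteristicFn (gamma mu lam r mbar : ℝ) (m : Measure ℝ) (s k : ℝ) : ℝ :=
  1 / 2 * s ^ 2 * k ^ 2 + (mu + gamma * lam * mbar) * k +
    lam * ∫ z, Real.exp (-(gamma * z * k)) ∂m - (r + lam)

section characteristicFn

variable {gamma mu lam r mbar : ℝ} {m : Measure ℝ}

lemma characteristicFn_zero [IsProbabilityMeasure m] (s : ℝ) :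
    characteristicFn gamma mu lam r mbar m s 0 = -r := by
  simp [characteristicFn]

lemma characteristicFn_lt_of_sq_lt {s shat k : ℝ} (hs : s ^ 2 < shat ^ 2) (hk : k ≠ 0) :
    characteristicFn gamma mu lam r mbar m s k < characteristicFn gamma mu lam r mbar m shat k := by
  have : s ^ 2 * k ^ 2 < shat ^ 2 * k ^ 2 := by gcongr
  unfold characteristicFn
  linarith

lemma convexOn_characteristicFn [IsFiniteMeasure m] (hm : ∀ᵐ z ∂m, 0 ≤ z) (hgamma : 0 ≤ gamma)
    (hlam : 0 ≤ lam) (s : ℝ) : ConvexOn ℝ (Ici 0) (characteristicFn gamma mu lam r mbar m s) := by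
  have hquad : ConvexOn ℝ (Ici 0) fun k : ℝ => 1 / 2 * s ^ 2 * k ^ 2 :=
    (convexOn_pow 2).smul (by positivity)
  have hlin : ConvexOn ℝ (Ici 0) fun k : ℝ => (mu + gamma * lam * mbar) * k :=
    LinearMap.convexOn (LinearMap.mul ℝ ℝ (mu + gamma * lam * mbar)) (convex_Ici 0)
  exact ((hquad.add hlin).add
    ((convexOn_integral_exp_neg_mul_mul hm hgamma).smul hlam)).add_const _

end characteristicFn

theorem arithmetic_root_decreasing_in_volatility_general
    (gamma mu lam r : ℝ)
    (hgamma : 0 < gamma) (hlam : 0 ≤ lam) (hr : 0 < r)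
    (m : Measure ℝ) [IsProbabilityMeasure m]
    (hm : m (Ioi 0)ᶜ = 0)
    (mbar : ℝ)
    (k₁ : ℝ → ℝ)
    (hk₁ : ∀ s : ℝ, 0 < s → 0 < k₁ s ∧
      1 / 2 * s ^ 2 * k₁ s ^ 2 + (mu + gamma * lam * mbar) * k₁ s +
        lam * ∫ z, Real.exp (-(gamma * z * k₁ s)) ∂m - (r + lam) = 0) :
    ∀ s shat : ℝ, 0 < s → s < shat → k₁ shat < k₁ s := by
  intro s shat hs hss
  have hm_pos : ∀ᵐ z ∂m, z ∈ Ioi 0 := mem_ae_iff.2 hm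
  have hm_nonneg : ∀ᵐ z ∂m, 0 ≤ z := hm_pos.mono fun _ hz => le_of_lt hz
  obtain ⟨hpos, hroot⟩ := hk₁ s hs
  obtain ⟨hpos_hat, hroot_hat⟩ := hk₁ shat (hs.trans hss)
  refine (convexOn_characteristicFn hm_nonneg hgamma.le hlam s).lt_of_apply_eq_zero
    ((characteristicFn_zero s).trans_lt (neg_neg_of_pos hr)) hpos.le hpos_hat.le hroot ?_
  calc characteristicFn gamma mu lam r mbar m s (k₁ shat)
      < characteristicFn gamma mu lam r mbar m shat (k₁ shat) :=
        characteristicFn_lt_of_sq_lt (by gcongr) hpos_hat.ne'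
    _ = 0 := hroot_hat

/-- The unique positive root `k₁(σ)` of the arithmetic characteristic equation is
strictly decreasing in the volatility `σ` (Theorem 5.1 of the paper, arithmetic
case). -/
theorem arithmetic_root_decreasing_in_volatility
    (gamma mu lam r : ℝ)
    (hgamma : 0 < gamma) (hlam : 0 ≤ lam) (hr : 0 < r)
    (m : Measure ℝ) [IsProbabilityMeasure m]
    (hm : m (Ioi 0)ᶜ = 0)
    (hint : Integrable (fun z => z) m)
    (mbar : ℝ) (hmbar : mbar = ∫ z, z ∂m)
    (k₁ : ℝ → ℝ)
    (hk₁ : ∀ s : ℝ, 0 < s → 0 < k₁ s ∧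
      1 / 2 * s ^ 2 * k₁ s ^ 2 + (mu + gamma * lam * mbar) * k₁ s +
        lam * ∫ z, Real.exp (-(gamma * z * k₁ s)) ∂m - (r + lam) = 0) :
    ∀ s shat : ℝ, 0 < s → s < shat → k₁ shat < k₁ s :=
  arithmetic_root_decreasing_in_volatility_general gamma mu lam r hgamma hlam hr m hm mbar k₁ hk₁
end

section
/- The point x* = min(I + 1/k, K) is the unique global maximizer over ℝ of h(x) = e^{−kx}·max(min(K,x) − I, 0); moreover h is nondecreasing on (−∞, x*] and strictly decreasing on [x*, ∞). In particular x* = I + 1/k if k ≥ 1/(K−I) and x* = K if k < 1/(K−I), and consequently for every x ∈ ℝ, sup_{y ≥ x} e^{−ky}·max(min(K,y) − I, 0) equals e^{−kx*}(x* − I) when x < x* and equals e^{−kx}·max(min(K,x) − I, 0) when x ≥ x*. -/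
/-!
Write `h(y) = e^{-ky} (min(K,y) - I)⁺`. It vanishes on `(-∞, I]`, equals
`φ(y) = e^{-ky} (y - I)` on `[I, K]` and the strictly decreasing `e^{-ky} (K - I)` on `[K, ∞)`.
Since `φ'(y) = e^{-ky} (1 - k (y - I))`, `φ` increases strictly up to `I + 1/k` and decreases
strictly after it. Gluing the pieces, `h` is nondecreasing up to `x* = min(I + 1/k, K)`, strictly
increasing on `[I, x*]` and strictly decreasing from `x*` on, so `x*` is its unique maximizer and
`sup_{y ≥ x} h` is attained at `max(x, x*)`.
-/

open Set

theorem isGreatest_image_Ici_of_forall_le {α β : Type*} [Preorder α] [Preorder β]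
    {f : α → β} {c x : α} (hmax : ∀ y, f y ≤ f c) (hx : x ≤ c) : IsGreatest (f '' Ici x) (f c) :=
  ⟨mem_image_of_mem f hx, forall_mem_image.2 fun y _ => hmax y⟩

noncomputable def discountedCall (k I y : ℝ) : ℝ :=
  Real.exp (-(k * y)) * (y - I)

noncomputable def discountedCappedCall (k K I y : ℝ) : ℝ :=
  Real.exp (-(k * y)) * max (min K y - I) 0

section DiscountedCall

variable {k I : ℝ}

theorem hasDerivAt_discountedCall (k I y : ℝ) :
    HasDerivAt (discountedCall k I) (Real.exp (-(k * y)) * (1 - k * (y - I))) y := by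
  have hexp : HasDerivAt (fun y => Real.exp (-(k * y))) (Real.exp (-(k * y)) * -k) y := by
    simpa using ((hasDerivAt_id y).const_mul k).neg.exp
  exact (hexp.mul ((hasDerivAt_id' y).sub_const I)).congr_deriv (by ring)

theorem continuous_discountedCall (k I : ℝ) : Continuous (discountedCall k I) :=
  continuous_iff_continuousAt.mpr fun y => (hasDerivAt_discountedCall k I y).continuousAt

theorem strictMonoOn_discountedCall (hk : 0 < k) :
    StrictMonoOn (discountedCall k I) (Iic (I + 1 / k)) := by
  refine strictMonoOn_of_deriv_pos (convex_Iic _) (continuous_discountedCall k I).continuousOn ?_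
  intro y hy
  rw [interior_Iic, mem_Iio, ← sub_lt_iff_lt_add', lt_div_iff₀' hk] at hy
  rw [(hasDerivAt_discountedCall k I y).deriv]
  exact mul_pos (Real.exp_pos _) (sub_pos.mpr hy)

theorem strictAntiOn_discountedCall (hk : 0 < k) :
    StrictAntiOn (discountedCall k I) (Ici (I + 1 / k)) := by
  refine strictAntiOn_of_deriv_neg (convex_Ici _) (continuous_discountedCall k I).continuousOn ?_
  intro y hy
  rw [interior_Ici, mem_Ioi, ← lt_sub_iff_add_lt', div_lt_iff₀' hk] at hy
  rw [(hasDerivAt_discountedCall k I y).deriv]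
  exact mul_neg_of_pos_of_neg (Real.exp_pos _) (sub_neg.mpr hy)

end DiscountedCall

section DiscountedCappedCall

variable {k K I y : ℝ}

theorem discountedCappedCall_of_le (hy : y ≤ I) : discountedCappedCall k K I y = 0 := by
  rw [discountedCappedCall, max_eq_right (by linarith [min_le_right K y]), mul_zero]

theorem discountedCappedCall_of_mem_Icc (hy : y ∈ Icc I K) :
    discountedCappedCall k K I y = discountedCall k I y := by
  rw [discountedCappedCall, discountedCall, min_eq_right hy.2, max_eq_left (sub_nonneg.mpr hy.1)]

theorem discountedCappedCall_of_le_cap (hKI : I ≤ K) (hy : K ≤ y) :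
    discountedCappedCall k K I y = Real.exp (-(k * y)) * (K - I) := by
  rw [discountedCappedCall, min_eq_left hy, max_eq_left (sub_nonneg.mpr hKI)]

theorem strictAntiOn_discountedCappedCall_Ici_cap (hk : 0 < k) (hKI : I < K) :
    StrictAntiOn (discountedCappedCall k K I) (Ici K) := by
  intro a ha b hb hab
  rw [discountedCappedCall_of_le_cap hKI.le ha, discountedCappedCall_of_le_cap hKI.le hb]
  gcongr

theorem lt_min_add_one_div (hk : 0 < k) (hKI : I < K) : I < min (I + 1 / k) K :=
  lt_min (lt_add_of_pos_right I (by positivity)) hKI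

theorem strictMonoOn_discountedCappedCall (hk : 0 < k) :
    StrictMonoOn (discountedCappedCall k K I) (Icc I (min (I + 1 / k) K)) := by
  refine (strictMonoOn_discountedCall hk).mono (fun y hy => hy.2.trans (min_le_left _ _))
    |>.congr fun y hy => ?_
  exact (discountedCappedCall_of_mem_Icc ⟨hy.1, hy.2.trans (min_le_right _ _)⟩).symm

theorem monotoneOn_discountedCappedCall (hk : 0 < k) (hKI : I < K) :
    MonotoneOn (discountedCappedCall k K I) (Iic (min (I + 1 / k) K)) := by
  have hIx := (lt_min_add_one_div hk hKI).le
  rw [← Iic_union_Icc_eq_Iic hIx]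
  refine MonotoneOn.union_right ?_ (strictMonoOn_discountedCappedCall hk).monotoneOn
    isGreatest_Iic (isLeast_Icc hIx)
  intro a ha b hb _
  rw [discountedCappedCall_of_le ha, discountedCappedCall_of_le hb]

theorem strictAntiOn_discountedCappedCall (hk : 0 < k) (hKI : I < K) :
    StrictAntiOn (discountedCappedCall k K I) (Ici (min (I + 1 / k) K)) := by
  rcases le_total (I + 1 / k) K with hc | hc
  · rw [min_eq_left hc, ← Icc_union_Ici_eq_Ici hc]
    refine StrictAntiOn.union ?_ (strictAntiOn_discountedCappedCall_Ici_cap hk hKI)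
      (isGreatest_Icc hc) isLeast_Ici
    refine (strictAntiOn_discountedCall hk).mono Icc_subset_Ici_self |>.congr fun y hy => ?_
    have hIc : I ≤ I + 1 / k := le_add_of_nonneg_right (by positivity)
    exact (discountedCappedCall_of_mem_Icc ⟨hIc.trans hy.1, hy.2⟩).symm
  · rw [min_eq_right hc]
    exact strictAntiOn_discountedCappedCall_Ici_cap hk hKI

theorem discountedCappedCall_lt_threshold (hk : 0 < k) (hKI : I < K) :
    ∀ y ≠ min (I + 1 / k) K,
      discountedCappedCall k K I y < discountedCappedCall k K I (min (I + 1 / k) K) := by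
  intro y hy
  set c := min (I + 1 / k) K
  have hIc := lt_min_add_one_div hk hKI
  rcases hy.lt_or_gt with hy | hy
  · -- Below `I` the payoff is flat, so compare through `max y I`, where it increases strictly.
    calc discountedCappedCall k K I y
        ≤ discountedCappedCall k K I (max y I) :=
          monotoneOn_discountedCappedCall hk hKI hy.le (max_lt hy hIc).le (le_max_left y I)
      _ < discountedCappedCall k K I c :=
          strictMonoOn_discountedCappedCall hk ⟨le_max_right y I, (max_lt hy hIc).le⟩
            ⟨hIc.le, le_rfl⟩ (max_lt hy hIc)
  · exact strictAntiOn_discountedCappedCall hk hKI (le_refl c) hy.le hy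

end DiscountedCappedCall

theorem capped_option_threshold_general
    (k K I : ℝ) (hk : 0 < k) (hKI : I < K)
    (h : ℝ → ℝ)
    (hdef : ∀ y : ℝ, h y = Real.exp (-(k * y)) * max (min K y - I) 0)
    (xstar : ℝ) (hxstar : xstar = min (I + 1 / k) K) :
    (∀ y : ℝ, y ≠ xstar → h y < h xstar) ∧
    MonotoneOn h (Iic xstar) ∧
    StrictAntiOn h (Ici xstar) ∧
    (1 / (K - I) ≤ k → xstar = I + 1 / k) ∧
    (k < 1 / (K - I) → xstar = K) ∧
    (∀ x : ℝ, x < xstar →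
      IsGreatest (h '' Ici x) (Real.exp (-(k * xstar)) * (xstar - I))) ∧
    (∀ x : ℝ, xstar ≤ x → IsGreatest (h '' Ici x) (h x)) := by
  obtain rfl : h = discountedCappedCall k K I := funext hdef
  subst hxstar
  have hKI' : 0 < K - I := sub_pos.mpr hKI
  have hmax := discountedCappedCall_lt_threshold hk hKI
  have hanti := strictAntiOn_discountedCappedCall hk hKI
  have hval : discountedCappedCall k K I (min (I + 1 / k) K) =
      Real.exp (-(k * min (I + 1 / k) K)) * (min (I + 1 / k) K - I) :=
    discountedCappedCall_of_mem_Icc ⟨(lt_min_add_one_div hk hKI).le, min_le_right _ _⟩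
  refine ⟨hmax, monotoneOn_discountedCappedCall hk hKI, hanti, fun hc => ?_, fun hc => ?_,
    fun x hx => hval ▸ isGreatest_image_Ici_of_forall_le (fun y => ?_) hx.le,
    fun x hx => (hanti.antitoneOn.mono (Ici_subset_Ici.mpr hx)).map_isLeast isLeast_Ici⟩
  · exact min_eq_left (by linarith [(one_div_le hKI' hk).mp hc])
  · exact min_eq_right (by linarith [(lt_one_div hk hKI').mp hc])
  · rcases eq_or_ne y (min (I + 1 / k) K) with rfl | hy
    exacts [le_rfl, (hmax y hy).le]

/-- Capped option reward (Section 7.1 of the paper): for `k > 0` and `K > I > 0`,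
the point `x* = min(I + 1/k, K)` is the unique global maximizer of
`h(x) = e^{−kx}·(min(K,x) − I)⁺`; `h` is nondecreasing on `(−∞,x*]` and strictly
decreasing on `[x*,∞)`; `x* = I + 1/k` iff `k ≥ 1/(K−I)` and `x* = K` otherwise;
and for every `x`, `sup_{y ≥ x} h(y)` equals `e^{−kx*}(x*−I)` if `x < x*` and
`h(x)` if `x ≥ x*`. -/
theorem capped_option_threshold
    (k K I : ℝ) (hk : 0 < k) (hKI : I < K) (hI : 0 < I)
    (h : ℝ → ℝ)
    (hdef : ∀ y : ℝ, h y = Real.exp (-(k * y)) * max (min K y - I) 0)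
    (xstar : ℝ) (hxstar : xstar = min (I + 1 / k) K) :
    (∀ y : ℝ, y ≠ xstar → h y < h xstar) ∧
    MonotoneOn h (Iic xstar) ∧
    StrictAntiOn h (Ici xstar) ∧
    (1 / (K - I) ≤ k → xstar = I + 1 / k) ∧
    (k < 1 / (K - I) → xstar = K) ∧
    (∀ x : ℝ, x < xstar →
      IsGreatest (h '' Ici x) (Real.exp (-(k * xstar)) * (xstar - I))) ∧
    (∀ x : ℝ, xstar ≤ x → IsGreatest (h '' Ici x) (h x)) :=
  capped_option_threshold_general k K I hk hKI h hdef xstar hxstar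
end

section
/- The function F is convex on [0,∞), F(0) = −r < 0, F(1) = α − r, F(k) → +∞ as k → ∞, and there exists a unique k₁ > 0 with F(k₁) = 0; moreover k₁ > 1 if α < r, k₁ = 1 if α = r, and k₁ < 1 if α > r. -/
/-!
`F` is a convex quadratic plus `λ` times `k ↦ ∫ (1 - z) ^ k d𝔪`, which is convex as an average of
the convex functions `k ↦ exp (k log (1 - z))` and nonnegative, so `F` is convex and tends to `+∞`.
A convex function on `[0, ∞)` with `f 0 < 0` is negative before any positive root and positive
after it, so it has at most one positive root, and at least one by the intermediate value theorem.
Comparing with the sign of `F 1 = α - r` places that root relative to `1`.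
-/

open Set MeasureTheory Filter

namespace ConvexOn

variable {f : ℝ → ℝ} {a t : ℝ}

lemma pos_of_root_lt (hf : ConvexOn ℝ (Ici 0) f) (hf0 : f 0 < 0) (ha : 0 < a) (hfa : f a = 0)
    (hat : a < t) : 0 < f t := by
  have hmem : a ∈ openSegment ℝ 0 t := by
    rw [openSegment_eq_Ioo (ha.trans hat)]
    exact ⟨ha, hat⟩
  simpa [hfa] using hf.lt_right_of_left_lt self_mem_Ici (ha.trans hat).le hmem (hfa ▸ hf0)

lemma neg_of_lt_root (hf : ConvexOn ℝ (Ici 0) f) (hf0 : f 0 < 0) (hfa : f a = 0)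
    (ht : 0 < t) (hta : t < a) : f t < 0 := by
  have hmem : t ∈ openSegment ℝ 0 a := by
    rw [openSegment_eq_Ioo (ht.trans hta)]
    exact ⟨ht, hta⟩
  by_contra! h
  have := hf.lt_right_of_left_lt self_mem_Ici (ht.trans hta).le hmem (hf0.trans_le h)
  linarith

lemma neg_iff_lt_root (hf : ConvexOn ℝ (Ici 0) f) (hf0 : f 0 < 0) (ha : 0 < a) (hfa : f a = 0)
    (ht : 0 < t) : f t < 0 ↔ t < a := by
  refine ⟨fun h => ?_, hf.neg_of_lt_root hf0 hfa ht⟩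
  by_contra! hat
  rcases hat.eq_or_lt with rfl | hat
  · exact h.ne hfa
  · exact (hf.pos_of_root_lt hf0 ha hfa hat).not_gt h

lemma pos_iff_root_lt (hf : ConvexOn ℝ (Ici 0) f) (hf0 : f 0 < 0) (ha : 0 < a) (hfa : f a = 0)
    (ht : 0 < t) : 0 < f t ↔ a < t := by
  refine ⟨fun h => ?_, hf.pos_of_root_lt hf0 ha hfa⟩
  by_contra! hta
  rcases hta.eq_or_lt with rfl | hta
  · exact h.ne' hfa
  · exact (hf.neg_of_lt_root hf0 hfa ht hta).not_gt h

lemma eq_zero_iff_eq_root (hf : ConvexOn ℝ (Ici 0) f) (hf0 : f 0 < 0) (ha : 0 < a)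
    (hfa : f a = 0) (ht : 0 < t) : f t = 0 ↔ t = a := by
  refine ⟨fun h => ?_, fun h => h ▸ hfa⟩
  rcases lt_trichotomy t a with hta | hta | hta
  · exact absurd h (hf.neg_of_lt_root hf0 hfa ht hta).ne
  · exact hta
  · exact absurd h (hf.pos_of_root_lt hf0 ha hfa hta).ne'

/-- The chord from `(0, f 0)` to `(K, f K)` vanishes at some `t₀ > 0`, where convexity gives
`f t₀ ≤ 0`; the root then comes from the intermediate value theorem on `[t₀, K]`, where `f` is
continuous as a convex function on an open interval. -/
lemma exists_pos_root (hf : ConvexOn ℝ (Ici 0) f) (hf0 : f 0 < 0)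
    (htop : Tendsto f atTop atTop) : ∃ a, 0 < a ∧ f a = 0 := by
  obtain ⟨K, hfK, hK⟩ := ((htop.eventually_gt_atTop 0).and (eventually_gt_atTop 0)).exists
  set θ := -f 0 / (f K - f 0)
  have hθ0 : 0 < θ := div_pos (neg_pos.2 hf0) (by linarith)
  have hθ1 : θ < 1 := (div_lt_one (by linarith)).2 (by linarith)
  have hchord : f (θ * K) ≤ 0 := by
    have := hf.2 self_mem_Ici hK.le (sub_pos.2 hθ1).le hθ0.le (sub_add_cancel 1 θ)
    simp only [smul_eq_mul, mul_zero, zero_add] at this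
    have hθ_chord : θ * (f K - f 0) = -f 0 := div_mul_cancel₀ _ (by linarith)
    nlinarith
  have hθK : θ * K ≤ K := mul_le_of_le_one_left hK.le hθ1.le
  have hcont : ContinuousOn f (Icc (θ * K) K) :=
    (interior_Ici (a := (0 : ℝ)) ▸ hf.continuousOn_interior).mono
      fun x hx => (mul_pos hθ0 hK).trans_le hx.1
  obtain ⟨a, ha, hfa⟩ := intermediate_value_Icc hθK hcont ⟨hchord, hfK.le⟩
  exact ⟨a, (mul_pos hθ0 hK).trans_le ha.1, hfa⟩

lemma existsUnique_pos_root (hf : ConvexOn ℝ (Ici 0) f) (hf0 : f 0 < 0)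
    (htop : Tendsto f atTop atTop) : ∃! a, 0 < a ∧ f a = 0 := by
  obtain ⟨a, ha, hfa⟩ := hf.exists_pos_root hf0 htop
  exact ⟨a, ⟨ha, hfa⟩, fun t ⟨ht, hft⟩ => (hf.eq_zero_iff_eq_root hf0 ha hfa ht).1 hft⟩

end ConvexOn

lemma convexOn_integral {α E : Type*} [MeasurableSpace α] {μ : Measure α} [AddCommGroup E]
    [Module ℝ E] {s : Set E} {φ : α → E → ℝ} (hs : Convex ℝ s) (hφ : ∀ᵐ z ∂μ, ConvexOn ℝ s (φ z))
    (hint : ∀ x ∈ s, Integrable (φ · x) μ) : ConvexOn ℝ s fun x => ∫ z, φ z x ∂μ := by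
  refine ⟨hs, fun x hx y hy a b ha hb hab => ?_⟩
  calc ∫ z, φ z (a • x + b • y) ∂μ
      ≤ ∫ z, (a * φ z x + b * φ z y) ∂μ :=
        integral_mono_ae (hint _ (hs hx hy ha hb hab))
          (((hint x hx).const_mul a).add ((hint y hy).const_mul b))
          (by filter_upwards [hφ] with z hz using hz.2 hx hy ha hb hab)
    _ = a • ∫ z, φ z x ∂μ + b • ∫ z, φ z y ∂μ := by
        rw [integral_add ((hint x hx).const_mul a) ((hint y hy).const_mul b),
          integral_const_mul, integral_const_mul, smul_eq_mul, smul_eq_mul]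

lemma integrable_one_sub_rpow {m : Measure ℝ} [IsFiniteMeasure m] (hm : ∀ᵐ z ∂m, z ∈ Icc 0 1)
    {k : ℝ} (hk : 0 ≤ k) : Integrable (fun z => (1 - z) ^ k) m := by
  have hcont : Continuous fun z : ℝ => (1 - z) ^ k :=
    (Real.continuous_rpow_const hk).comp (continuous_const.sub continuous_id)
  refine (integrable_const (1 : ℝ)).mono' hcont.aestronglyMeasurable ?_
  filter_upwards [hm] with z hz
  rw [Real.norm_of_nonneg (Real.rpow_nonneg (sub_nonneg.2 hz.2) _)]
  exact Real.rpow_le_one (sub_nonneg.2 hz.2) (sub_le_self _ hz.1) hk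

lemma convexOn_integral_one_sub_rpow {m : Measure ℝ} [IsFiniteMeasure m]
    (hm : ∀ᵐ z ∂m, z ∈ Ico 0 1) : ConvexOn ℝ (Ici 0) fun k : ℝ => ∫ z, (1 - z) ^ k ∂m :=
  convexOn_integral (convex_Ici 0)
    (hm.mono fun _ hz => (convexOn_rpow_left (sub_pos.2 hz.2)).subset (subset_univ _)
      (convex_Ici 0))
    fun _ hk => integrable_one_sub_rpow (hm.mono fun _ hz => Ico_subset_Icc_self hz) hk

lemma convexOn_quadratic {a : ℝ} (ha : 0 ≤ a) (b c : ℝ) :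
    ConvexOn ℝ univ fun x : ℝ => a * x ^ 2 + b * x + c := by
  refine ⟨convex_univ, fun x _ y _ p q hp hq hpq => ?_⟩
  obtain rfl : q = 1 - p := by linarith
  simp only [smul_eq_mul]
  nlinarith [mul_nonneg (mul_nonneg ha (mul_nonneg hp hq)) (sq_nonneg (x - y))]

lemma tendsto_quadratic_atTop {a : ℝ} (ha : 0 < a) (b c : ℝ) :
    Tendsto (fun x : ℝ => a * x ^ 2 + b * x + c) atTop atTop := by
  have h : Tendsto (fun x : ℝ => x * (a * x + b)) atTop atTop :=
    tendsto_id.atTop_mul_atTop₀ (tendsto_atTop_add_const_right _ b (tendsto_id.const_mul_atTop ha))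
  refine (tendsto_atTop_add_const_right _ c h).congr fun x => ?_
  ring

/-- Properties of the geometric characteristic function
`F(k) = (1/2)σ²k(k−1) + (α+λm̄)k − (r+λ) + λ∫(1−z)^k 𝔪(dz)`:
`F` is convex on `[0,∞)`, `F(0) = −r < 0`, `F(1) = α − r`, `F(k) → +∞` as
`k → ∞`, there is a unique positive root `k₁`, and `k₁ > 1` if `α < r`,
`k₁ = 1` if `α = r`, `k₁ < 1` if `α > r`. -/
theorem geometric_characteristic_root
    (sigma alpha lam r : ℝ)
    (hsigma : 0 < sigma) (hlam : 0 ≤ lam) (hr : 0 < r)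
    (m : Measure ℝ) [IsProbabilityMeasure m]
    (hm : m (Ioo 0 1)ᶜ = 0)
    (hint : Integrable (fun z => z) m)
    (mbar : ℝ) (hmbar : mbar = ∫ z, z ∂m) :
    ConvexOn ℝ (Ici 0)
      (fun k => 1 / 2 * sigma ^ 2 * k * (k - 1) + (alpha + lam * mbar) * k -
        (r + lam) + lam * ∫ z, (1 - z) ^ k ∂m) ∧
    (1 / 2 * sigma ^ 2 * (0 : ℝ) * ((0 : ℝ) - 1) + (alpha + lam * mbar) * 0 -
        (r + lam) + lam * ∫ z, (1 - z) ^ (0 : ℝ) ∂m) = -r ∧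
    (-r : ℝ) < 0 ∧
    (1 / 2 * sigma ^ 2 * (1 : ℝ) * ((1 : ℝ) - 1) + (alpha + lam * mbar) * 1 -
        (r + lam) + lam * ∫ z, (1 - z) ^ (1 : ℝ) ∂m) = alpha - r ∧
    Tendsto
      (fun k => 1 / 2 * sigma ^ 2 * k * (k - 1) + (alpha + lam * mbar) * k -
        (r + lam) + lam * ∫ z, (1 - z) ^ k ∂m) atTop atTop ∧
    (∃! k₁ : ℝ, 0 < k₁ ∧
      1 / 2 * sigma ^ 2 * k₁ * (k₁ - 1) + (alpha + lam * mbar) * k₁ -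
        (r + lam) + lam * ∫ z, (1 - z) ^ k₁ ∂m = 0) ∧
    (∀ k₁ : ℝ, 0 < k₁ →
      1 / 2 * sigma ^ 2 * k₁ * (k₁ - 1) + (alpha + lam * mbar) * k₁ -
        (r + lam) + lam * ∫ z, (1 - z) ^ k₁ ∂m = 0 →
      (alpha < r → 1 < k₁) ∧ (alpha = r → k₁ = 1) ∧ (r < alpha → k₁ < 1)) := by
  have hae : ∀ᵐ z ∂m, z ∈ Ioo 0 1 := ae_iff.2 hm
  let F : ℝ → ℝ := fun k => 1 / 2 * sigma ^ 2 * k * (k - 1) + (alpha + lam * mbar) * k -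
    (r + lam) + lam * ∫ z, (1 - z) ^ k ∂m
  have hF0 : F 0 = -r := by simp [F]
  have hF1 : F 1 = alpha - r := by
    have hmean : ∫ z, (1 - z) ^ (1 : ℝ) ∂m = 1 - mbar := by
      simp [integral_sub (integrable_const 1) hint, hmbar]
    simp only [F, hmean]
    ring
  have hF_eq (k : ℝ) : F k = (1 / 2 * sigma ^ 2 * k ^ 2 +
      (alpha + lam * mbar - 1 / 2 * sigma ^ 2) * k + -(r + lam)) + lam * ∫ z, (1 - z) ^ k ∂m := by
    simp only [F]
    ring
  have hquad_pos : 0 < 1 / 2 * sigma ^ 2 := by positivity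
  have hconv : ConvexOn ℝ (Ici 0) F :=
    (((convexOn_quadratic hquad_pos.le _ _).subset (subset_univ _) (convex_Ici 0)).add
      ((convexOn_integral_one_sub_rpow (hae.mono fun _ hz => Ioo_subset_Ico_self hz)).smul
        hlam)).congr fun k _ => (hF_eq k).symm
  have htop : Tendsto F atTop atTop :=
    (tendsto_atTop_add_right_of_le _ 0 (tendsto_quadratic_atTop hquad_pos _ _) fun k =>
      mul_nonneg hlam (integral_nonneg_of_ae (hae.mono fun z hz =>
        Real.rpow_nonneg (sub_nonneg.2 hz.2.le) k))).congr fun k => (hF_eq k).symm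
  have hF0neg : F 0 < 0 := hF0 ▸ neg_lt_zero.2 hr
  refine ⟨hconv, hF0, neg_lt_zero.2 hr, hF1, htop, hconv.existsUnique_pos_root hF0neg htop,
    fun k hk hFk => ⟨fun h => ?_, fun h => ?_, fun h => ?_⟩⟩
  · exact (hconv.neg_iff_lt_root hF0neg hk hFk one_pos).1 (by linarith)
  · exact ((hconv.eq_zero_iff_eq_root hF0neg hk hFk one_pos).1 (by linarith)).symm
  · exact (hconv.pos_iff_root_lt hF0neg hk hFk one_pos).1 (by linarith)
end

section
/- Assume λ > 0. For θ > 0 let k̂_θ denote the unique positive root of (1/2)σ²k(k−1) + (α + λm̄)k − θ = 0, i.e. k̂_θ = 1/2 − (α+λm̄)/σ² + √((1/2 − (α+λm̄)/σ²)² + 2θ/σ²). Then the unique positive root k₁ of F satisfies k̂_r < k₁ < k̂_{r+λ}. -/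
/-!
Write `q(k) = ½σ²k(k−1) + (α+λm̄)k`, so that `k̂_θ` is the larger root of `q − θ`. Since
`(1−z)^k₁ ∈ (0,1)` for `z ∈ (0,1)`, the integral `I = ∫ (1−z)^k₁ d𝔪` lies in `(0,1)`, and the
equation `F(k₁) = 0` reads `q(k₁) = r + λ(1 − I)`. Hence `r < q(k₁) < r + λ`: the point `k₁` lies
beyond the positive root of `q − r` but between the roots of `q − (r+λ)`.
-/

open Set MeasureTheory

section CharRoot

/-- The paper's `k̂_θ` (with `b = α + λm̄`): the larger root of `½σ²k(k−1) + bk − θ`. -/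
noncomputable def charRoot (σ b θ : ℝ) : ℝ :=
  1 / 2 - b / σ ^ 2 + √((1 / 2 - b / σ ^ 2) ^ 2 + 2 * θ / σ ^ 2)

variable {σ b θ x : ℝ}

lemma charPoly_eq_completed_square (hσ : σ ≠ 0) :
    1 / 2 * σ ^ 2 * x * (x - 1) + b * x - θ =
      σ ^ 2 / 2 * ((x - (1 / 2 - b / σ ^ 2)) ^ 2 -
        ((1 / 2 - b / σ ^ 2) ^ 2 + 2 * θ / σ ^ 2)) := by
  field_simp
  ring

lemma lt_charRoot_of_lt (hσ : σ ≠ 0) (h : 1 / 2 * σ ^ 2 * x * (x - 1) + b * x < θ) :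
    x < charRoot σ b θ := by
  have hid := charPoly_eq_completed_square (b := b) (θ := θ) (x := x) hσ
  have hσ2 : 0 < σ ^ 2 / 2 := by positivity
  unfold charRoot
  generalize 1 / 2 - b / σ ^ 2 = c at hid ⊢
  have hsq : (x - c) ^ 2 < c ^ 2 + 2 * θ / σ ^ 2 := by nlinarith
  linarith [Real.lt_sqrt_of_sq_lt hsq]

lemma charRoot_lt_of_lt (hσ : σ ≠ 0) (hθ : 0 ≤ θ) (hx : 0 < x)
    (h : θ < 1 / 2 * σ ^ 2 * x * (x - 1) + b * x) :
    charRoot σ b θ < x := by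
  have hid := charPoly_eq_completed_square (b := b) (θ := θ) (x := x) hσ
  have hσ2 : 0 < σ ^ 2 / 2 := by positivity
  have hθσ : 0 ≤ 2 * θ / σ ^ 2 := by positivity
  unfold charRoot
  generalize 1 / 2 - b / σ ^ 2 = c at hid ⊢
  have hsq : c ^ 2 + 2 * θ / σ ^ 2 < (x - c) ^ 2 := by nlinarith
  -- `θ ≥ 0` puts `c` inside the root interval, and `x > 0` then forces `x` to the right of it.
  have hxc : 0 < x - c := by
    by_contra! hle
    nlinarith
  linarith [(Real.sqrt_lt' hxc).2 hsq]

end CharRoot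

lemma integral_pos_of_ae_pos {α : Type*} [MeasurableSpace α] {μ : Measure α} [NeZero μ]
    {f : α → ℝ} (hfi : Integrable f μ) (hf : ∀ᵐ x ∂μ, 0 < f x) :
    0 < ∫ x, f x ∂μ := by
  have hf0 : 0 ≤ᵐ[μ] f := hf.mono fun _ hx => hx.le
  refine (integral_nonneg_of_ae hf0).lt_of_ne' fun h0 => ?_
  rw [integral_eq_zero_iff_of_nonneg_ae hf0 hfi] at h0
  obtain ⟨x, hx, hx0⟩ := (hf.and h0).exists
  exact hx.ne' hx0

lemma integral_mem_Ioo_of_ae_mem_Ioo {α : Type*} [MeasurableSpace α] {μ : Measure α}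
    [IsProbabilityMeasure μ] {f : α → ℝ} (hfm : AEStronglyMeasurable f μ)
    (hf : ∀ᵐ x ∂μ, f x ∈ Ioo 0 1) :
    ∫ x, f x ∂μ ∈ Ioo 0 1 := by
  have hfi : Integrable f μ := .of_bound hfm 1 <| hf.mono fun x hx => by
    rw [Real.norm_eq_abs, abs_of_pos hx.1]; exact hx.2.le
  have hcompl : 0 < ∫ x, (1 - f x) ∂μ :=
    integral_pos_of_ae_pos ((integrable_const 1).sub hfi) (hf.mono fun _ hx => sub_pos.2 hx.2)
  rw [integral_sub (integrable_const 1) hfi, integral_const, probReal_univ, one_smul] at hcompl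
  exact ⟨integral_pos_of_ae_pos hfi (hf.mono fun _ hx => hx.1), sub_pos.1 hcompl⟩

lemma integral_one_sub_rpow_mem_Ioo (m : Measure ℝ) [IsProbabilityMeasure m]
    (hm : ∀ᵐ z ∂m, z ∈ Ioo 0 1) {k : ℝ} (hk : 0 < k) :
    ∫ z, (1 - z) ^ k ∂m ∈ Ioo 0 1 := by
  refine integral_mem_Ioo_of_ae_mem_Ioo ?_ (hm.mono fun z hz => ?_)
  · exact ((Real.continuous_rpow_const hk.le).comp
      (continuous_const.sub continuous_id)).aestronglyMeasurable
  · exact ⟨Real.rpow_pos_of_pos (by linarith [hz.2]) k,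
      Real.rpow_lt_one (by linarith [hz.2]) (by linarith [hz.1]) hk⟩

theorem geometric_root_sandwich_general
    (sigma alpha lam r : ℝ)
    (hsigma : 0 < sigma) (hlam : 0 < lam) (hr : 0 < r)
    (m : Measure ℝ) [IsProbabilityMeasure m]
    (hm : m (Ioo 0 1)ᶜ = 0)
    (mbar : ℝ)
    (k₁ : ℝ) (hk₁pos : 0 < k₁)
    (hk₁root : 1 / 2 * sigma ^ 2 * k₁ * (k₁ - 1) + (alpha + lam * mbar) * k₁ -
      (r + lam) + lam * ∫ z, (1 - z) ^ k₁ ∂m = 0) :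
    1 / 2 - (alpha + lam * mbar) / sigma ^ 2 +
        Real.sqrt ((1 / 2 - (alpha + lam * mbar) / sigma ^ 2) ^ 2 +
          2 * r / sigma ^ 2)
      < k₁ ∧
    k₁ < 1 / 2 - (alpha + lam * mbar) / sigma ^ 2 +
        Real.sqrt ((1 / 2 - (alpha + lam * mbar) / sigma ^ 2) ^ 2 +
          2 * (r + lam) / sigma ^ 2) := by
  obtain ⟨hI_pos, hI_lt_one⟩ := integral_one_sub_rpow_mem_Ioo m (ae_iff.2 hm) hk₁pos
  have hlamI_pos := mul_pos hlam hI_pos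
  have hlamI_lt := mul_lt_mul_of_pos_left hI_lt_one hlam
  exact ⟨charRoot_lt_of_lt hsigma.ne' hr.le hk₁pos (by linarith),
    lt_charRoot_of_lt hsigma.ne' (by linarith)⟩

/-- Sandwich for the positive root of the geometric characteristic equation
(Lemma 3.2 of the paper, Section 7.2): if `λ > 0` and `k̂_θ` denotes the positive
root of `(1/2)σ²k(k−1) + (α+λm̄)k − θ = 0`, then `k̂_r < k₁ < k̂_{r+λ}`. -/
theorem geometric_root_sandwich
    (sigma alpha lam r : ℝ)
    (hsigma : 0 < sigma) (hlam : 0 < lam) (hr : 0 < r)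
    (m : Measure ℝ) [IsProbabilityMeasure m]
    (hm : m (Ioo 0 1)ᶜ = 0)
    (hint : Integrable (fun z => z) m)
    (mbar : ℝ) (hmbar : mbar = ∫ z, z ∂m)
    (k₁ : ℝ) (hk₁pos : 0 < k₁)
    (hk₁root : 1 / 2 * sigma ^ 2 * k₁ * (k₁ - 1) + (alpha + lam * mbar) * k₁ -
      (r + lam) + lam * ∫ z, (1 - z) ^ k₁ ∂m = 0) :
    1 / 2 - (alpha + lam * mbar) / sigma ^ 2 +
        Real.sqrt ((1 / 2 - (alpha + lam * mbar) / sigma ^ 2) ^ 2 +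
          2 * r / sigma ^ 2)
      < k₁ ∧
    k₁ < 1 / 2 - (alpha + lam * mbar) / sigma ^ 2 +
        Real.sqrt ((1 / 2 - (alpha + lam * mbar) / sigma ^ 2) ^ 2 +
          2 * (r + lam) / sigma ^ 2) :=
  geometric_root_sandwich_general sigma alpha lam r hsigma hlam hr m hm mbar k₁ hk₁pos hk₁root
end
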